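/- arXiv:2507.11445 — 6 statements merged into one kernel-verified Lean document; each statement's English description precedes it below -/
import Mathlib

section
/- Let X be a random variable with |X| ≤ 1 almost surely, E[X] = 0, and E[X²] ≤ ε². Then for all λ ≥ 0, E[e^{λX}] ≤ (e^{-λε²} + ε² e^{λ})/(1 + ε²). -/
open MeasureTheory Real

/-! For `x ≤ 1`, `exp (lam * x)` lies below the quadratic in `x` that is tangent to it at `-ε²`
and meets it at `1`: after the shift `y = lam * (x + ε²)` this is the monotonicity of
`(exp y - 1 - y) / y²`. Taking expectations kills the linear term since `E[X] = 0`, and since the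
quadratic coefficient is nonnegative, `E[X²] ≤ ε²` bounds the result by the expectation of the
quadratic under the two-point law on `{-ε², 1}`, where it agrees with `exp (lam * ·)`. -/

lemma mul_sub_two_mul_exp_add_add_two_nonneg (x : ℝ) : 0 ≤ x * ((x - 2) * exp x + x + 2) := by
  have hmono : Monotone fun x : ℝ => (x - 2) * exp x + x + 2 := by
    refine monotone_of_hasDerivAt_nonneg (f' := fun x => (x - 1) * exp x + 1)
      (fun x => ?_) (fun x => ?_)
    · exact ((((hasDerivAt_id' x).sub_const 2).mul (hasDerivAt_exp x)).add
        (hasDerivAt_id' x)).add_const 2 |>.congr_deriv (by ring)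
    · have h := mul_le_mul_of_nonneg_right (one_sub_le_exp_neg x) (exp_pos x).le
      rw [← exp_add, neg_add_cancel, exp_zero] at h
      dsimp; linarith
  rcases le_total 0 x with hx | hx
  · exact mul_nonneg hx (by simpa using hmono hx)
  · exact mul_nonneg_of_nonpos_of_nonpos hx (by simpa using hmono hx)

lemma monotoneOn_exp_sub_one_sub_div_sq {s : Set ℝ} (hs : Convex ℝ s) (h0 : 0 ∉ s) :
    MonotoneOn (fun x => (exp x - 1 - x) / x ^ 2) s := by
  have hne : ∀ x ∈ s, x ≠ 0 := fun x hx h => h0 (h ▸ hx)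
  refine monotoneOn_of_hasDerivWithinAt_nonneg hs
    (f' := fun x => x * ((x - 2) * exp x + x + 2) / (x ^ 2) ^ 2)
    (ContinuousOn.div (by fun_prop) (by fun_prop) fun x hx => pow_ne_zero 2 (hne x hx))
    (fun x hx => ?_)
    (fun x _ => div_nonneg (mul_sub_two_mul_exp_add_add_two_nonneg x) (by positivity))
  have hx := hne x (interior_subset hx)
  exact (((hasDerivAt_exp x).sub_const 1).sub (hasDerivAt_id' x)).div (hasDerivAt_pow 2 x)
    (pow_ne_zero 2 hx) |>.congr_deriv (by simp only [Pi.sub_apply]; ring) |>.hasDerivWithinAt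

lemma exp_le_one_add_add_sq_div_two_of_nonpos {x : ℝ} (hx : x ≤ 0) :
    exp x ≤ 1 + x + x ^ 2 / 2 := by
  have hanti : Antitone fun x : ℝ => 1 + x + x ^ 2 / 2 - exp x := by
    refine antitone_of_hasDerivAt_nonpos (f' := fun x => 1 + x - exp x) (fun x => ?_) (fun x => ?_)
    · exact (((hasDerivAt_id' x).const_add 1).add ((hasDerivAt_pow 2 x).div_const 2)).sub
        (hasDerivAt_exp x) |>.congr_deriv (by ring)
    · simp only [Pi.zero_apply]; linarith [add_one_le_exp x]
  simpa using hanti hx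

lemma sq_mul_exp_sub_one_sub_le_of_le {u v : ℝ} (huv : u ≤ v) :
    v ^ 2 * (exp u - 1 - u) ≤ u ^ 2 * (exp v - 1 - v) := by
  have key : ∀ s : Set ℝ, Convex ℝ s → 0 ∉ s → u ∈ s → v ∈ s →
      v ^ 2 * (exp u - 1 - u) ≤ u ^ 2 * (exp v - 1 - v) := fun s hs h0 hu hv => by
    have h := monotoneOn_exp_sub_one_sub_div_sq hs h0 hu hv huv
    have hu0 : u ≠ 0 := fun h => h0 (h ▸ hu)
    have hv0 : v ≠ 0 := fun h => h0 (h ▸ hv)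
    rw [div_le_div_iff₀ (by positivity) (by positivity)] at h
    linarith
  rcases lt_trichotomy v 0 with hv | rfl | hv
  · exact key (Set.Iio 0) (convex_Iio 0) (lt_irrefl (0 : ℝ)) (huv.trans_lt hv) hv
  · simp
  rcases lt_or_ge 0 u with hu | hu
  · exact key (Set.Ioi 0) (convex_Ioi 0) (lt_irrefl (0 : ℝ)) hu hv
  calc v ^ 2 * (exp u - 1 - u) ≤ v ^ 2 * (u ^ 2 / 2) := by
        gcongr; linarith [exp_le_one_add_add_sq_div_two_of_nonpos hu]
    _ = u ^ 2 * (v ^ 2 / 2) := by ring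
    _ ≤ u ^ 2 * (exp v - 1 - v) := by
        gcongr; linarith [quadratic_le_exp_of_nonneg hv.le]

lemma exp_mul_le_quadratic_of_le_one {lam s x : ℝ} (hlam : 0 ≤ lam) (hs : 1 + s ≠ 0)
    (hx : x ≤ 1) :
    exp (lam * x) ≤ exp (-lam * s) * (1 + lam * (x + s) +
      (exp (lam * (1 + s)) - 1 - lam * (1 + s)) * ((x + s) / (1 + s)) ^ 2) := by
  have hscaled : (1 + s) ^ 2 * (exp (lam * (x + s)) - 1 - lam * (x + s))
      ≤ (x + s) ^ 2 * (exp (lam * (1 + s)) - 1 - lam * (1 + s)) := by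
    rcases hlam.eq_or_lt with rfl | hlam
    · simp
    refine le_of_mul_le_mul_left ?_ (pow_pos hlam 2)
    have := sq_mul_exp_sub_one_sub_le_of_le
      (mul_le_mul_of_nonneg_left (by linarith : x + s ≤ 1 + s) hlam.le)
    linarith
  have hshift : exp (lam * (x + s)) - 1 - lam * (x + s)
      ≤ (exp (lam * (1 + s)) - 1 - lam * (1 + s)) * ((x + s) / (1 + s)) ^ 2 := by
    rw [div_pow, mul_div_assoc', le_div_iff₀ (by positivity)]
    linarith
  calc exp (lam * x) = exp (-lam * s) * exp (lam * (x + s)) := by rw [← exp_add]; ring_nf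
    _ ≤ _ := by gcongr; linarith

lemma integral_le_of_ae_le_quadratic {Ω : Type*} [MeasurableSpace Ω] {μ : Measure Ω}
    [IsProbabilityMeasure μ] {X Y : Ω → ℝ} {a b c v : ℝ} (hY : Integrable Y μ)
    (hX : Integrable X μ) (hX2 : Integrable (fun ω => X ω ^ 2) μ)
    (hle : ∀ᵐ ω ∂μ, Y ω ≤ a + b * X ω + c * X ω ^ 2) (hc : 0 ≤ c)
    (hmean : ∫ ω, X ω ∂μ = 0) (hvar : ∫ ω, X ω ^ 2 ∂μ ≤ v) :
    ∫ ω, Y ω ∂μ ≤ a + c * v := by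
  have hq : Integrable (fun ω => a + b * X ω) μ := (integrable_const a).add (hX.const_mul b)
  calc ∫ ω, Y ω ∂μ ≤ ∫ ω, (a + b * X ω + c * X ω ^ 2) ∂μ :=
        integral_mono_ae hY (hq.add (hX2.const_mul c)) hle
    _ = a + c * ∫ ω, X ω ^ 2 ∂μ := by
        rw [integral_add hq (hX2.const_mul c), integral_add (integrable_const a) (hX.const_mul b),
          integral_const_mul, integral_const_mul, hmean]
        simp
    _ ≤ a + c * v := by gcongr

theorem mgf_le_two_point_general {Ω : Type*} [MeasurableSpace Ω] (μ : Measure Ω)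
    [IsProbabilityMeasure μ] (X : Ω → ℝ) (hXm : Measurable X) (ε : ℝ)
    (hbdd : ∀ᵐ ω ∂μ, |X ω| ≤ 1) (hmean : ∫ ω, X ω ∂μ = 0)
    (hvar : ∫ ω, (X ω) ^ 2 ∂μ ≤ ε ^ 2) :
    ∀ lam : ℝ, 0 ≤ lam →
      ∫ ω, Real.exp (lam * X ω) ∂μ
        ≤ (Real.exp (-lam * ε ^ 2) + ε ^ 2 * Real.exp lam) / (1 + ε ^ 2) := by
  intro lam hlam
  set s := ε ^ 2
  have hs : 1 + s ≠ 0 := by positivity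
  set c := exp (-lam * s) * (exp (lam * (1 + s)) - 1 - lam * (1 + s)) / (1 + s) ^ 2 with hc
  have hc_nonneg : 0 ≤ c := by
    have := add_one_le_exp (lam * (1 + s))
    exact div_nonneg (mul_nonneg (exp_pos _).le (by linarith)) (sq_nonneg _)
  have hbound : ∀ᵐ ω ∂μ, ‖X ω‖ ≤ 1 := hbdd
  have hX : Integrable X μ := .of_bound hXm.aestronglyMeasurable 1 hbound
  have hX2 : Integrable (fun ω => X ω ^ 2) μ :=
    .of_bound (by fun_prop) 1 (hbound.mono fun ω h => by simpa using h)
  have hexp : Integrable (fun ω => exp (lam * X ω)) μ := by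
    refine .of_bound (by fun_prop) (exp lam) (hbound.mono fun ω h => ?_)
    rw [norm_of_nonneg (exp_pos _).le, exp_le_exp]
    nlinarith [(abs_le.mp h).2]
  have hle : ∀ᵐ ω ∂μ, exp (lam * X ω) ≤ exp (-lam * s) * (1 + lam * s) + c * s ^ 2
      + (exp (-lam * s) * lam + 2 * s * c) * X ω + c * X ω ^ 2 :=
    hbound.mono fun ω h => (exp_mul_le_quadratic_of_le_one hlam hs (abs_le.mp h).2).trans_eq
      (by rw [hc]; field_simp; ring)
  refine (integral_le_of_ae_le_quadratic hexp hX hX2 hle hc_nonneg hmean hvar).trans_eq ?_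
  have hprod : exp (-lam * s) * exp (lam * (1 + s)) = exp lam := by rw [← exp_add]; ring_nf
  rw [hc, ← hprod]
  field_simp
  ring

/-- If `|X| ≤ 1` a.s., `E[X] = 0` and `E[X²] ≤ ε²`, then for every `λ ≥ 0`,
`E[exp (λ X)] ≤ (exp (-λ ε²) + ε² exp λ) / (1 + ε²)`. -/
theorem mgf_le_two_point {Ω : Type*} [MeasurableSpace Ω] (μ : Measure Ω)
    [IsProbabilityMeasure μ] (X : Ω → ℝ) (hXm : Measurable X) (ε : ℝ) (hε : 0 < ε)
    (hbdd : ∀ᵐ ω ∂μ, |X ω| ≤ 1) (hmean : ∫ ω, X ω ∂μ = 0)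
    (hvar : ∫ ω, (X ω) ^ 2 ∂μ ≤ ε ^ 2) :
    ∀ lam : ℝ, 0 ≤ lam →
      ∫ ω, Real.exp (lam * X ω) ∂μ
        ≤ (Real.exp (-lam * ε ^ 2) + ε ^ 2 * Real.exp lam) / (1 + ε ^ 2) :=
  mgf_le_two_point_general μ X hXm ε hbdd hmean hvar
end

section
/- For every ε ∈ (0,1) there exists ν = ν(ε) > 0 with ν(ε) → 0 as ε → 0, such that every random variable X with |X| ≤ 1 a.s., E[X] = 0, and E[X²] ≤ ε² satisfies E[e^{λX}] ≤ e^{νλ²/2} for all λ ∈ ℝ. In particular one may take ν = 1/(2|ln ε|) for all sufficiently small ε. -/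
open MeasureTheory Real Filter

open Nat in
lemma real_exp_tsum (x : ℝ) : Real.exp x = ∑' n : ℕ, x ^ n / (n ! : ℝ) := by
  rw [Real.exp_eq_exp_ℝ, NormedSpace.exp_eq_tsum_div]

open Nat in
lemma exp_expand (y : ℝ) :
    Real.exp y = 1 + y + ∑' n : ℕ, y ^ (n + 2) / ((n + 2)! : ℝ) := by
  have hs := Real.summable_pow_div_factorial y
  rw [real_exp_tsum y, Summable.tsum_eq_zero_add hs,
    Summable.tsum_eq_zero_add ((summable_nat_add_iff 1).mpr hs)]
  have h2 : (fun b : ℕ => y ^ (b + 1 + 1) / ((b + 1 + 1)! : ℝ))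
      = fun n : ℕ => y ^ (n + 2) / ((n + 2)! : ℝ) := by
    funext n; norm_num [add_assoc]
  rw [h2]
  norm_num [add_assoc]

open Nat in
lemma summable_tail (y : ℝ) : Summable (fun n : ℕ => y ^ (n + 2) / ((n + 2)! : ℝ)) :=
  (summable_nat_add_iff 2).mpr (Real.summable_pow_div_factorial y)

open Nat in
lemma pointwise_exp_bound {x : ℝ} (hx : |x| ≤ 1) (lam : ℝ) :
    Real.exp (lam * x) ≤ 1 + lam * x + x ^ 2 * (Real.exp |lam| - |lam| - 1) := by
  rw [exp_expand (lam * x)]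
  have hE : Real.exp |lam| - |lam| - 1 = ∑' n : ℕ, |lam| ^ (n + 2) / ((n + 2)! : ℝ) := by
    rw [exp_expand |lam|]; ring
  rw [hE, ← tsum_mul_left]
  gcongr 1 + lam * x + ?_
  refine Summable.tsum_le_tsum (fun n => ?_) (summable_tail _)
    ((summable_tail |lam|).mul_left _)
  have hfac : (0:ℝ) < ((n + 2)! : ℝ) := by positivity
  have h1 : (lam * x) ^ (n + 2) ≤ |lam * x| ^ (n + 2) := by
    calc (lam * x) ^ (n + 2) ≤ |(lam * x) ^ (n + 2)| := le_abs_self _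
    _ = |lam * x| ^ (n + 2) := by rw [abs_pow]
  have h2 : |lam * x| ^ (n + 2) = |lam| ^ (n + 2) * |x| ^ (n + 2) := by
    rw [abs_mul, mul_pow]
  have h3 : |x| ^ (n + 2) ≤ x ^ 2 := by
    calc |x| ^ (n + 2) ≤ |x| ^ 2 := pow_le_pow_of_le_one (abs_nonneg x) hx (by omega)
    _ = x ^ 2 := sq_abs x
  have : (lam * x) ^ (n + 2) ≤ x ^ 2 * |lam| ^ (n + 2) := by
    calc (lam * x) ^ (n+2) ≤ |lam| ^ (n + 2) * |x| ^ (n + 2) := by rw [← h2]; exact h1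
    _ ≤ |lam| ^ (n + 2) * x ^ 2 :=
        mul_le_mul_of_nonneg_left h3 (pow_nonneg (abs_nonneg _) _)
    _ = x ^ 2 * |lam| ^ (n + 2) := by ring
  rw [← mul_div_assoc]
  exact div_le_div_of_nonneg_right this hfac.le

lemma exp_sub_le_mul {t : ℝ} (ht : 0 ≤ t) : Real.exp t - 1 ≤ t * Real.exp t := by
  have h := mul_le_mul_of_nonneg_right (Real.add_one_le_exp (-t)) (Real.exp_pos t).le
  rw [← Real.exp_add] at h
  simp at h
  nlinarith

lemma four_L_le_exp {L : ℝ} (hL : 4 ≤ L) : 4 * L ≤ Real.exp L := by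
  have h : Real.exp L = Real.exp (L/4) ^ 4 := by
    rw [← Real.exp_nat_mul]; push_cast; ring_nf
  have h2 : L/4 + 1 ≤ Real.exp (L/4) := Real.add_one_le_exp _
  have h3 : (0:ℝ) ≤ L/4 + 1 := by nlinarith
  have h4 : (L/4 + 1)^4 ≤ Real.exp (L/4) ^ 4 := by
    apply pow_le_pow_left₀ h3 h2
  rw [h]
  nlinarith [h4, sq_nonneg (L - 4), sq_nonneg L]

lemma key_small {L t s : ℝ} (hL : 4 ≤ L) (ht : 0 ≤ t) (hs : 0 ≤ s)
    (hsε : s ≤ Real.exp (-(2*L))) :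
    1 + s * (Real.exp t - t - 1) ≤ Real.exp (t^2/(4*L)) := by
  have hc0 : 0 ≤ Real.exp t - t - 1 := by nlinarith [Real.add_one_le_exp t]
  by_cases h : t ≤ L
  · have h1 : Real.exp t - t - 1 ≤ t^2 * Real.exp t := by
      have := exp_sub_le_mul ht
      nlinarith [Real.exp_pos t]
    have h2 : s * (Real.exp t - t - 1) ≤ t^2 * Real.exp (t - 2*L) := by
      calc s * (Real.exp t - t - 1) ≤ Real.exp (-(2*L)) * (t^2 * Real.exp t) := by
            apply mul_le_mul hsε h1 hc0 (Real.exp_pos _).le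
      _ = t^2 * Real.exp (t - 2*L) := by
            rw [show t - 2*L = t + -(2*L) by ring, Real.exp_add]; ring
    have h3 : Real.exp (t - 2*L) ≤ Real.exp (-L) := by
      apply Real.exp_le_exp.mpr; linarith
    have h4 : Real.exp (-L) ≤ 1/(4*L) := by
      have h4L : (0:ℝ) < 4*L := by linarith
      rw [Real.exp_neg, inv_le_comm₀ (Real.exp_pos L) (by positivity : (0:ℝ) < 1/(4*L)),
        one_div, inv_inv]
      exact four_L_le_exp hL
    have h5 : s * (Real.exp t - t - 1) ≤ t^2/(4*L) := by
      have ht2 : (0:ℝ) ≤ t^2 := sq_nonneg t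
      calc s * (Real.exp t - t - 1) ≤ t^2 * Real.exp (-L) := by nlinarith
      _ ≤ t^2 * (1/(4*L)) := by nlinarith
      _ = t^2/(4*L) := by ring
    linarith [Real.add_one_le_exp (t^2/(4*L))]
  · push_neg at h
    have hb : s * (Real.exp t - t - 1) ≤ Real.exp (t - 2*L) := by
      calc s * (Real.exp t - t - 1) ≤ Real.exp (-(2*L)) * Real.exp t := by
            apply mul_le_mul hsε (by linarith) hc0 (Real.exp_pos _).le
      _ = Real.exp (t - 2*L) := by rw [← Real.exp_add]; ring_nf
    by_cases h2 : t ≤ 2*L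
    · have : 1 + s * (Real.exp t - t - 1) ≤ 2 := by
        have : Real.exp (t - 2*L) ≤ 1 := Real.exp_le_one_iff.mpr (by linarith)
        linarith
      have h6 : (2:ℝ) ≤ Real.exp (t^2/(4*L)) := by
        have : (1:ℝ) ≤ t^2/(4*L) := by
          rw [le_div_iff₀ (by linarith)]
          nlinarith
        calc (2:ℝ) ≤ Real.exp 1 := by linarith [Real.add_one_le_exp (1:ℝ)]
        _ ≤ Real.exp (t^2/(4*L)) := Real.exp_le_exp.mpr this
      linarith
    · push_neg at h2
      have hlog2 : Real.log 2 ≤ 1 := by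
        linarith [Real.log_le_sub_one_of_pos (by norm_num : (0:ℝ) < 2)]
      have h7 : 1 + Real.exp (t - 2*L) ≤ 2 * Real.exp (t - 2*L) := by
        have : (1:ℝ) ≤ Real.exp (t - 2*L) := Real.one_le_exp (by linarith)
        linarith
      have h8 : 2 * Real.exp (t - 2*L) = Real.exp (Real.log 2 + (t - 2*L)) := by
        rw [Real.exp_add, Real.exp_log (by norm_num : (0:ℝ) < 2)]
      have h9 : Real.log 2 + (t - 2*L) ≤ t^2/(4*L) := by
        have hL4 : (0:ℝ) < 4*L := by linarith
        rw [le_div_iff₀ hL4]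
        nlinarith [sq_nonneg (t - 2*L)]
      calc 1 + s * (Real.exp t - t - 1) ≤ 1 + Real.exp (t - 2*L) := by linarith
      _ ≤ 2 * Real.exp (t - 2*L) := h7
      _ = Real.exp (Real.log 2 + (t - 2*L)) := h8
      _ ≤ Real.exp (t^2/(4*L)) := Real.exp_le_exp.mpr (by linarith [h9])

lemma key_big {t : ℝ} (ht : 0 ≤ t) : Real.exp t - t ≤ Real.exp (t^2) := by
  by_cases h : t ≤ 1
  · have hb := Real.exp_bound' ht h (n := 3) (by norm_num)
    have hsum : ∑ m ∈ Finset.range 3, t ^ m / (m.factorial : ℝ) = 1 + t + t^2/2 := by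
      simp [Finset.sum_range_succ]
    have hfac : ((3:ℕ).factorial : ℝ) = 6 := by norm_num [Nat.factorial]
    rw [hsum, hfac] at hb
    have h1 : Real.exp t ≤ 1 + t + t^2 := by
      have : t^3 * (3+1)/(6*3) ≤ t^2/2 := by nlinarith [sq_nonneg t, pow_nonneg ht 3]
      push_cast at hb
      nlinarith
    have h2 : 1 + t^2 ≤ Real.exp (t^2) := by linarith [Real.add_one_le_exp (t^2)]
    linarith
  · push_neg at h
    have : Real.exp t ≤ Real.exp (t^2) := Real.exp_le_exp.mpr (by nlinarith)
    linarith

lemma sq_integrable {Ω : Type} [MeasurableSpace Ω] (μ : Measure Ω)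
    [IsProbabilityMeasure μ] (X : Ω → ℝ) (hmX : Measurable X)
    (hb : ∀ᵐ ω ∂μ, |X ω| ≤ 1) : Integrable (fun ω => (X ω)^2) μ := by
  refine Integrable.mono' (integrable_const 1) ((hmX.pow_const 2).aestronglyMeasurable) ?_
  filter_upwards [hb] with ω h
  rw [Real.norm_eq_abs, abs_pow]
  calc |X ω|^2 ≤ 1^2 := pow_le_pow_left₀ (abs_nonneg _) h 2
  _ = 1 := one_pow 2

lemma integral_exp_le {Ω : Type} [MeasurableSpace Ω] (μ : Measure Ω)
    [IsProbabilityMeasure μ] (X : Ω → ℝ) (hmX : Measurable X)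
    (hb : ∀ᵐ ω ∂μ, |X ω| ≤ 1) (hmean : (∫ ω, X ω ∂μ) = 0) (lam : ℝ) :
    ∫ ω, Real.exp (lam * X ω) ∂μ ≤
      1 + (∫ ω, (X ω) ^ 2 ∂μ) * (Real.exp |lam| - |lam| - 1) := by
  set c := Real.exp |lam| - |lam| - 1 with hc
  have hiX : Integrable X μ := by
    refine Integrable.mono' (integrable_const 1) hmX.aestronglyMeasurable ?_
    filter_upwards [hb] with ω h using by rwa [Real.norm_eq_abs]
  have hiX2 : Integrable (fun ω => (X ω)^2) μ := sq_integrable μ X hmX hb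
  have hiE : Integrable (fun ω => Real.exp (lam * X ω)) μ := by
    refine Integrable.mono' (integrable_const (Real.exp |lam|))
      ((Real.measurable_exp.comp (measurable_const.mul hmX)).aestronglyMeasurable) ?_
    filter_upwards [hb] with ω h
    rw [Real.norm_eq_abs, abs_of_pos (Real.exp_pos _), Real.exp_le_exp]
    calc lam * X ω ≤ |lam * X ω| := le_abs_self _
    _ = |lam| * |X ω| := abs_mul _ _
    _ ≤ |lam| * 1 := mul_le_mul_of_nonneg_left h (abs_nonneg _)
    _ = |lam| := mul_one _
  have hRHS : Integrable (fun ω => 1 + lam * X ω + (X ω)^2 * c) μ :=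
    ((integrable_const 1).add (hiX.const_mul lam)).add (hiX2.mul_const c)
  have hmono : ∫ ω, Real.exp (lam * X ω) ∂μ ≤ ∫ ω, (1 + lam * X ω + (X ω)^2 * c) ∂μ := by
    refine integral_mono_ae hiE hRHS ?_
    filter_upwards [hb] with ω h using pointwise_exp_bound h lam
  have hcalc : ∫ ω, (1 + lam * X ω + (X ω)^2 * c) ∂μ
      = 1 + (∫ ω, (X ω)^2 ∂μ) * c := by
    have h0 : Integrable (fun ω => lam * X ω) μ := hiX.const_mul lam
    have h1 : Integrable (fun ω => 1 + lam * X ω) μ := (integrable_const 1).add h0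
    have h2 : Integrable (fun ω => (X ω)^2 * c) μ := hiX2.mul_const c
    rw [integral_add h1 h2, integral_add (integrable_const 1) h0,
      integral_const, integral_const_mul, integral_mul_const, hmean]
    simp
  rw [hcalc] at hmono
  exact hmono

/-- For every `ε ∈ (0,1)` there is `ν = ν(ε) > 0`, with `ν(ε) → 0` as `ε → 0`
(and one may take `ν = 1/(2|ln ε|)` for sufficiently small `ε`), such that any random
variable `X` with `|X| ≤ 1` a.s., `E[X] = 0` and `E[X²] ≤ ε²` satisfies
`E[exp (λ X)] ≤ exp (ν λ² / 2)` for all real `λ`. -/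
theorem subgaussian_coefficient_exists :
    ∃ ν : ℝ → ℝ,
      (∀ ε ∈ Set.Ioo (0 : ℝ) 1, 0 < ν ε) ∧
      Tendsto ν (nhdsWithin 0 (Set.Ioi 0)) (nhds 0) ∧
      (∀ᶠ ε in nhdsWithin (0 : ℝ) (Set.Ioi 0), ν ε = 1 / (2 * |Real.log ε|)) ∧
      ∀ ε ∈ Set.Ioo (0 : ℝ) 1,
        ∀ (Ω : Type) (mΩ : MeasurableSpace Ω) (μ : Measure Ω),
          IsProbabilityMeasure μ →
          ∀ X : Ω → ℝ, Measurable X →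
            (∀ᵐ ω ∂μ, |X ω| ≤ 1) → (∫ ω, X ω ∂μ) = 0 →
            (∫ ω, (X ω) ^ 2 ∂μ) ≤ ε ^ 2 →
            ∀ lam : ℝ,
              ∫ ω, Real.exp (lam * X ω) ∂μ ≤ Real.exp (ν ε * lam ^ 2 / 2) := by
  classical
  have hIoo : Set.Ioo (0:ℝ) (Real.exp (-4)) ∈ nhdsWithin (0:ℝ) (Set.Ioi 0) :=
    Ioo_mem_nhdsGT_of_mem ⟨le_refl 0, Real.exp_pos _⟩
  refine ⟨fun ε => if ε < Real.exp (-4) then 1/(2*|Real.log ε|) else 2, ?_, ?_, ?_, ?_⟩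
  · rintro ε ⟨h0, h1⟩
    by_cases h : ε < Real.exp (-4)
    · simp only [if_pos h]
      have hlog : Real.log ε < 0 := Real.log_neg h0 h1
      have habs : 0 < |Real.log ε| := abs_pos.mpr (ne_of_lt hlog)
      positivity
    · simp [if_neg h]
  · have hev : (fun ε : ℝ => 1/(2*|Real.log ε|)) =ᶠ[nhdsWithin (0:ℝ) (Set.Ioi 0)]
        (fun ε => if ε < Real.exp (-4) then 1/(2*|Real.log ε|) else 2) := by
      filter_upwards [hIoo] with ε hε
      rw [if_pos hε.2]
    refine Tendsto.congr' hev ?_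
    have h1 : Tendsto (fun ε : ℝ => |Real.log ε|) (nhdsWithin 0 (Set.Ioi 0)) atTop :=
      tendsto_abs_atBot_atTop.comp Real.tendsto_log_nhdsGT_zero
    have h2 : Tendsto (fun ε : ℝ => 2*|Real.log ε|) (nhdsWithin 0 (Set.Ioi 0)) atTop :=
      h1.const_mul_atTop (by norm_num)
    refine h2.inv_tendsto_atTop.congr fun x => ?_
    simp [one_div]
  · filter_upwards [hIoo] with ε hε
    rw [if_pos hε.2]
  · rintro ε ⟨h0, h1⟩ Ω mΩ μ hμ X hmX hb hmean hvar lam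
    have key := integral_exp_le μ X hmX hb hmean lam
    have hs0 : 0 ≤ ∫ ω, (X ω)^2 ∂μ := integral_nonneg (fun ω => sq_nonneg _)
    have hc0 : 0 ≤ Real.exp |lam| - |lam| - 1 := by nlinarith [Real.add_one_le_exp |lam|]
    by_cases h : ε < Real.exp (-4)
    · simp only [if_pos h]
      set L := -Real.log ε with hLdef
      have hlogneg : Real.log ε < 0 := Real.log_neg h0 h1
      have hL4 : 4 ≤ L := by
        have := Real.log_lt_log h0 h
        rw [Real.log_exp] at this
        simp only [hLdef]; linarith
      have habs : |Real.log ε| = L := abs_of_neg hlogneg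
      have hε2 : ε^2 = Real.exp (-(2*L)) := by
        rw [show ε = Real.exp (-L) by rw [hLdef, neg_neg, Real.exp_log h0]]
        rw [← Real.exp_nat_mul]
        push_cast; ring_nf
      have hsmall := key_small (L := L) (t := |lam|) (s := ∫ ω, (X ω)^2 ∂μ)
        hL4 (abs_nonneg lam) hs0 (le_of_le_of_eq hvar hε2)
      have heq : 1/(2*|Real.log ε|) * lam^2 / 2 = |lam|^2/(4*L) := by
        rw [habs, ← sq_abs lam]
        ring
      rw [heq]
      calc ∫ ω, Real.exp (lam * X ω) ∂μ
          ≤ 1 + (∫ ω, (X ω)^2 ∂μ) * (Real.exp |lam| - |lam| - 1) := key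
      _ ≤ Real.exp (|lam|^2/(4*L)) := hsmall
    · simp only [if_neg h]
      have hvar1 : ∫ ω, (X ω)^2 ∂μ ≤ 1 := by
        have hle : ∫ ω, (X ω)^2 ∂μ ≤ ∫ _ω, (1:ℝ) ∂μ := by
          refine integral_mono_ae (sq_integrable μ X hmX hb) (integrable_const 1) ?_
          filter_upwards [hb] with ω hω
          calc (X ω)^2 = |X ω|^2 := (sq_abs _).symm
          _ ≤ 1^2 := pow_le_pow_left₀ (abs_nonneg _) hω 2
          _ = 1 := one_pow 2
        simpa using hle
      have hbig := key_big (abs_nonneg lam)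
      have heq : (2:ℝ) * lam^2 / 2 = |lam|^2 := by rw [← sq_abs lam]; ring
      rw [heq]
      calc ∫ ω, Real.exp (lam * X ω) ∂μ
          ≤ 1 + (∫ ω, (X ω)^2 ∂μ) * (Real.exp |lam| - |lam| - 1) := key
      _ ≤ 1 + 1 * (Real.exp |lam| - |lam| - 1) := by nlinarith
      _ = Real.exp |lam| - |lam| := by ring
      _ ≤ Real.exp (|lam|^2) := hbig
end

section
/- Consider the optimization of E[e^{λX}] over two-point distributions on [-1,1] with mean 0 and second moment ε² ≤ 1, i.e., over probability measures pδ_a + (1-p)δ_b with a < b in [-1,1], pa + (1-p)b = 0, and pa² + (1-p)b² = ε². For λ ≥ 0 the maximum is attained at a = -ε², b = 1, p = 1/(1+ε²), giving value (e^{-λε²} + ε² e^{λ})/(1 + ε²). -/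
/-!
Bound `exp (λ x)` on `x ≤ 1` by the quadratic `q` that is tangent to it at `x = -s` (`s = ε²`)
and meets it at `x = 1`. The expectation of a quadratic under a two-point law depends only on the
first two moments, so every admissible law has `E exp (λ X) ≤ E q(X)`, and `E q(X)` is the same
for all of them; for the law on `{-s, 1}` it equals `E exp (λ X)`, since `q = exp (λ ·)` there.

That `q - exp (λ ·)` is nonnegative comes from its derivative being concave (`λ ≥ 0`): the
derivative vanishes at `-s` and, by Rolle, somewhere in `(-s, 1)`, which fixes its sign pattern.
-/

open Real Set

theorem nonneg_on_Iic_of_concaveOn_deriv {f f' : ℝ → ℝ} {a b : ℝ} (hab : a < b)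
    (hf : ∀ x, HasDerivAt f (f' x) x) (hf' : ConcaveOn ℝ univ f')
    (hfa : f a = 0) (hf'a : f' a = 0) (hfb : f b = 0) : ∀ x ≤ b, 0 ≤ f x := by
  have hcont : Continuous f := continuous_iff_continuousAt.2 fun x => (hf x).continuousAt
  obtain ⟨c, ⟨hac, hcb⟩, hf'c⟩ :=
    exists_hasDerivAt_eq_zero hab hcont.continuousOn (hfa.trans hfb.symm) fun x _ => hf x
  have hderiv : ∀ D : Set ℝ, ∀ x ∈ interior D, HasDerivWithinAt f (f' x) (interior D) x :=
    fun _ x _ => (hf x).hasDerivWithinAt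
  intro x hxb
  rcases le_or_gt x a with hxa | hax
  · have hanti : AntitoneOn f (Iic a) :=
      antitoneOn_of_hasDerivWithinAt_nonpos (convex_Iic a) hcont.continuousOn (hderiv _)
        fun y hy => hf'a ▸ hf'.left_le_of_le_right'' trivial trivial
          (interior_Iic.subset hy).le hac (hf'a.trans hf'c.symm).le
    exact hfa ▸ hanti hxa (mem_Iic.2 le_rfl) hxa
  rcases le_or_gt x c with hxc | hcx
  · have hmono : MonotoneOn f (Icc a c) :=
      monotoneOn_of_hasDerivWithinAt_nonneg (convex_Icc a c) hcont.continuousOn (hderiv _)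
        fun y hy => by
          have := hf'.ge_on_segment trivial trivial
            ((segment_eq_Icc hac.le).symm ▸ interior_subset hy)
          rwa [hf'a, hf'c, min_self] at this
    exact hfa ▸ hmono ⟨le_rfl, hac.le⟩ ⟨hax.le, hxc⟩ hax.le
  · have hanti : AntitoneOn f (Icc c b) :=
      antitoneOn_of_hasDerivWithinAt_nonpos (convex_Icc c b) hcont.continuousOn (hderiv _)
        fun y hy => hf'c ▸ hf'.right_le_of_le_left'' trivial trivial hac
          (interior_subset hy).1 (hf'c.trans hf'a.symm).le
    exact hfb ▸ hanti ⟨hcx.le, hxb⟩ ⟨hcb.le, le_rfl⟩ hxb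

noncomputable def expMajorantCoeff (lam s : ℝ) : ℝ :=
  (exp lam - exp (-(lam * s)) * (1 + lam * (1 + s))) / (1 + s) ^ 2

/-- The quadratic in `x` tangent to `exp (lam * x)` at `x = -s` and meeting it at `x = 1`. -/
noncomputable def expMajorant (lam s x : ℝ) : ℝ :=
  exp (-(lam * s)) * (1 + lam * (x + s)) + expMajorantCoeff lam s * (x + s) ^ 2

section expMajorant

variable {lam s : ℝ}

theorem expMajorant_neg_self : expMajorant lam s (-s) = exp (lam * -s) := by
  simp [expMajorant]

theorem expMajorant_one (hs : 1 + s ≠ 0) : expMajorant lam s 1 = exp (lam * 1) := by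
  simp only [expMajorant, expMajorantCoeff, mul_one]
  field_simp
  ring

theorem hasDerivAt_expMajorant (x : ℝ) :
    HasDerivAt (expMajorant lam s)
      (exp (-(lam * s)) * lam + 2 * expMajorantCoeff lam s * (x + s)) x := by
  have hshift := (hasDerivAt_id' x).add_const s
  refine (((hshift.const_mul lam).const_add 1).const_mul _ |>.add
    ((hshift.pow 2).const_mul _)).congr_deriv ?_
  norm_num
  ring

theorem concaveOn_affine_sub_exp_mul (hlam : 0 ≤ lam) (A B : ℝ) :
    ConcaveOn ℝ univ fun x => A + B * x - lam * exp (lam * x) := by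
  refine ⟨convex_univ, fun x _ y _ a b ha hb hab => ?_⟩
  have hexp := convexOn_exp.2 (mem_univ (lam * x)) (mem_univ (lam * y)) ha hb hab
  simp only [smul_eq_mul] at hexp ⊢
  rw [show a * (lam * x) + b * (lam * y) = lam * (a * x + b * y) by ring] at hexp
  linear_combination lam * hexp + A * hab

theorem exp_le_expMajorant (hlam : 0 ≤ lam) (hs : -1 < s) {x : ℝ} (hx : x ≤ 1) :
    exp (lam * x) ≤ expMajorant lam s x := by
  set C := expMajorantCoeff lam s
  have hderiv (y : ℝ) : HasDerivAt (fun y => expMajorant lam s y - exp (lam * y))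
      (exp (-(lam * s)) * lam + 2 * C * s + 2 * C * y - lam * exp (lam * y)) y :=
    ((hasDerivAt_expMajorant y).sub ((hasDerivAt_id' y).const_mul lam).exp).congr_deriv
      (by ring)
  have hgap := nonneg_on_Iic_of_concaveOn_deriv (show -s < 1 by linarith) hderiv
    (concaveOn_affine_sub_exp_mul hlam _ _) (by rw [expMajorant_neg_self, sub_self])
    (by simp only [mul_neg]; ring) (by rw [expMajorant_one (by linarith), sub_self]) x hx
  exact sub_nonneg.1 hgap

theorem two_point_expectation_expMajorant (hs : 1 + s ≠ 0) {a b p : ℝ}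
    (hmean : p * a + (1 - p) * b = 0) (hvar : p * a ^ 2 + (1 - p) * b ^ 2 = s) :
    p * expMajorant lam s a + (1 - p) * expMajorant lam s b
      = (exp (-lam * s) + s * exp lam) / (1 + s) := by
  calc _ = exp (-(lam * s)) * (1 + lam * s) + expMajorantCoeff lam s * (s * (1 + s)) := by
        simp only [expMajorant]
        linear_combination (exp (-(lam * s)) * lam + 2 * expMajorantCoeff lam s * s) * hmean
          + expMajorantCoeff lam s * hvar
    _ = _ := by
        rw [expMajorantCoeff, neg_mul]
        field_simp
        ring

end expMajorant

theorem two_point_mgf_max_general (lam ε : ℝ) (hlam : 0 ≤ lam) :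
    (∀ a b p : ℝ, -1 ≤ a → a < b → b ≤ 1 → 0 ≤ p → p ≤ 1 →
        p * a + (1 - p) * b = 0 → p * a ^ 2 + (1 - p) * b ^ 2 = ε ^ 2 →
        p * Real.exp (lam * a) + (1 - p) * Real.exp (lam * b)
          ≤ (Real.exp (-lam * ε ^ 2) + ε ^ 2 * Real.exp lam) / (1 + ε ^ 2)) ∧
    (1 / (1 + ε ^ 2)) * Real.exp (lam * (-ε ^ 2))
        + (ε ^ 2 / (1 + ε ^ 2)) * Real.exp (lam * 1)
      = (Real.exp (-lam * ε ^ 2) + ε ^ 2 * Real.exp lam) / (1 + ε ^ 2) := by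
  have hs : -1 < ε ^ 2 := by linarith [sq_nonneg ε]
  refine ⟨fun a b p _ hab hb hp hp1 hmean hvar => ?_, ?_⟩
  · calc p * exp (lam * a) + (1 - p) * exp (lam * b)
        ≤ p * expMajorant lam (ε ^ 2) a + (1 - p) * expMajorant lam (ε ^ 2) b := by
          gcongr
          · exact exp_le_expMajorant hlam hs (hab.le.trans hb)
          · exact exp_le_expMajorant hlam hs hb
      _ = _ := two_point_expectation_expMajorant (by linarith) hmean hvar
  · rw [mul_neg, ← neg_mul, mul_one]
    field_simp

/-- Over two-point distributions `p δ_a + (1-p) δ_b` on `[-1,1]` with mean `0`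
and second moment `ε² ≤ 1`, the value `E[exp (λ X)]` (for `λ ≥ 0`) is maximized at
`a = -ε²`, `b = 1`, `p = 1/(1+ε²)`, where it equals `(exp (-λ ε²) + ε² exp λ)/(1 + ε²)`. -/
theorem two_point_mgf_max (lam ε : ℝ) (hlam : 0 ≤ lam) (hε : 0 < ε) (hε1 : ε ≤ 1) :
    (∀ a b p : ℝ, -1 ≤ a → a < b → b ≤ 1 → 0 ≤ p → p ≤ 1 →
        p * a + (1 - p) * b = 0 → p * a ^ 2 + (1 - p) * b ^ 2 = ε ^ 2 →
        p * Real.exp (lam * a) + (1 - p) * Real.exp (lam * b)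
          ≤ (Real.exp (-lam * ε ^ 2) + ε ^ 2 * Real.exp lam) / (1 + ε ^ 2)) ∧
    (1 / (1 + ε ^ 2)) * Real.exp (lam * (-ε ^ 2))
        + (ε ^ 2 / (1 + ε ^ 2)) * Real.exp (lam * 1)
      = (Real.exp (-lam * ε ^ 2) + ε ^ 2 * Real.exp lam) / (1 + ε ^ 2) :=
  two_point_mgf_max_general lam ε hlam
end

section
/- For d ≥ 2, the number of sets in Γ(n) := {R ⊆ ℤ^d : R connected, |R| = n, 0 ∈ R ∪ Int(R)} is at most e^n (3^d − 1)^{2n}. -/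
/-!
A connected set `R` with `|R| = n` is traced out by a walk with `2n` steps, each step moving every
coordinate by `-1`, `0` or `1`: start at a point of `R` standing still for two steps, and absorb
each new point `v` adjacent to a visited `u` by the detour `u → v → u`. Such a walk is determined
by its start and one of `(3^d)^(2n)` step sequences. If `0 ∈ Int R`, the ray from `0` along the
first axis meets `R` first at some `q e₁`; for `m < q` the ray from `m e₁` along the second axis
stays in the finite component of `0` until it meets `R`, at a point with first coordinate `m`.
Hence `q ≤ n`, which leaves `n + 1` starting points, and `(n + 1) (3^d)^(2n) ≤ e^n (3^d - 1)^(2n)`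
because `n + 1 ≤ 2^n` and `2 X² ≤ e (X - 1)²` for `X ≥ 9`.
-/

/-- Points of the lattice `ℤ^d`. -/
abbrev Pt (d : ℕ) := Fin d → ℤ

/-- Two lattice points are adjacent if they are distinct and at `L^∞`-distance at most 1
(i.e. exactly 1). -/
def adj {d : ℕ} (s t : Pt d) : Prop := s ≠ t ∧ ∀ i, |s i - t i| ≤ 1

/-- A set `R ⊆ ℤ^d` is connected if any two of its points are joined by a path inside `R`
whose consecutive points are at `L^∞`-distance 1. -/
def connectedIn {d : ℕ} (R : Set (Pt d)) : Prop :=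
  ∀ s ∈ R, ∀ t ∈ R, Relation.ReflTransGen (fun a b => a ∈ R ∧ b ∈ R ∧ adj a b) s t

/-- The external boundary `∂R = {s ∉ R : dist_∞(s, R) = 1}`. -/
def extBoundary {d : ℕ} (R : Set (Pt d)) : Set (Pt d) :=
  {s | s ∉ R ∧ ∃ t ∈ R, adj s t}

/-- The interior `Int R`: the union of the finite connected components of the complement. -/
def latticeInt {d : ℕ} (R : Set (Pt d)) : Set (Pt d) :=
  {s | s ∉ R ∧
    Set.Finite {t | Relation.ReflTransGen (fun a b => a ∉ R ∧ b ∉ R ∧ adj a b) s t}}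

open Finset Relation

section CoveringWalk

variable {α : Type*} {r : α → α → Prop}

theorem Relation.ReflTransGen.exists_rel_notMem {S : Set α} {a b : α} (h : ReflTransGen r a b)
    (ha : a ∈ S) (hb : b ∉ S) : ∃ u ∈ S, ∃ v ∉ S, r u v := by
  induction h with
  | refl => exact absurd ha hb
  | @tail b c _ hbc ih =>
    by_cases hbS : b ∈ S
    · exact ⟨b, hbS, c, hb, hbc⟩
    · exact ih hbS

theorem List.IsChain.exists_cons_toFinset_eq_insert [DecidableEq α] [Std.Symm r] {x u v : α}
    {t : List α} (hch : (x :: t).IsChain r) (hu : u ∈ x :: t) (huv : r u v) :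
    ∃ t' : List α, t'.length = t.length + 2 ∧ (x :: t').IsChain r ∧
      (x :: t').toFinset = insert v (x :: t).toFinset := by
  obtain ⟨l₁, l₂, hl⟩ := List.append_of_mem hu
  have hdetour : (l₁ ++ u :: v :: u :: l₂).IsChain r := by
    rw [hl, List.isChain_split] at hch
    rw [List.isChain_split, List.isChain_cons_cons, List.isChain_cons_cons]
    exact ⟨hch.1, huv, symm_of r huv, hch.2⟩
  cases l₁ with
  | nil =>
    obtain ⟨rfl, rfl⟩ := List.cons_eq_cons.1 hl
    refine ⟨v :: x :: t, by simp, hdetour, ?_⟩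
    ext; simp
  | cons y l₁ =>
    obtain ⟨rfl, rfl⟩ := List.cons_eq_cons.1 hl
    refine ⟨l₁ ++ u :: v :: u :: l₂, by simp; omega, hdetour, ?_⟩
    ext; simp; tauto

theorem exists_isChain_cons_toFinset_eq [DecidableEq α] [Std.Refl r] [Std.Symm r]
    {R : Finset α} {x : α} (hx : x ∈ R)
    (hconn : ∀ y ∈ R, ReflTransGen (fun a b => a ∈ R ∧ b ∈ R ∧ r a b) x y) :
    ∃ t : List α, t.length = 2 * #R ∧ (x :: t).IsChain r ∧ (x :: t).toFinset = R := by
  suffices h : ∀ k, 1 ≤ k → k ≤ #R → ∃ S ⊆ R, #S = k ∧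
      ∃ t : List α, t.length = 2 * k ∧ (x :: t).IsChain r ∧ (x :: t).toFinset = S by
    obtain ⟨S, hSR, hS, hwalk⟩ := h #R (card_pos.2 ⟨x, hx⟩) le_rfl
    rwa [eq_of_subset_of_card_le hSR hS.ge] at hwalk
  intro k hk hkR
  induction k, hk using Nat.le_induction with
  | base => exact ⟨{x}, by simpa, card_singleton x, [x, x], rfl, by simp [refl_of r], by simp⟩
  | succ k hk ih =>
    obtain ⟨S, hSR, rfl, t, hlen, hch, hS⟩ := ih (by omega)
    obtain ⟨y, hyR, hyS⟩ := exists_mem_notMem_of_card_lt_card (s := S) (t := R) (by omega)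
    have hxS : x ∈ S := by simp [← hS]
    obtain ⟨u, hu, v, hv, -, hvR, huv⟩ := (hconn y hyR).exists_rel_notMem (S := ↑S) hxS hyS
    obtain ⟨t', hlen', hch', hS'⟩ :=
      hch.exists_cons_toFinset_eq_insert (by rwa [← List.mem_toFinset, hS]) huv
    exact ⟨insert v S, insert_subset hvR hSR, card_insert_of_notMem hv, t', by omega, hch',
      by rw [hS', hS]⟩

end CoveringWalk

section LatticeWalk

variable {d : ℕ}

def near (a b : Pt d) : Prop := ∀ i, |a i - b i| ≤ 1

instance : Std.Refl (near (d := d)) := ⟨fun a i => by simp⟩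

instance : Std.Symm (near (d := d)) := ⟨fun a b h i => by rw [abs_sub_comm]; exact h i⟩

theorem adj.near {a b : Pt d} (h : adj a b) : near a b := h.2

theorem adj_add_self {a v : Pt d} (hv : v ≠ 0) (hv1 : ∀ i, |v i| ≤ 1) : adj a (a + v) :=
  ⟨by simpa [eq_comm] using hv, fun i => by simpa using hv1 i⟩

def unitStep (c : Fin d → Fin 3) : Pt d := fun i => (c i : ℤ) - 1

theorem exists_add_unitStep_eq {a b : Pt d} (h : near a b) : ∃ c, b = a + unitStep c := by
  refine ⟨fun i => ⟨(b i - a i + 1).toNat, by have := abs_le.1 (h i); omega⟩, ?_⟩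
  funext i
  have := abs_le.1 (h i)
  simp only [unitStep, Pi.add_apply]
  omega

def stepWalk (x : Pt d) {m : ℕ} (f : Fin m → Fin d → Fin 3) : List (Pt d) :=
  (List.ofFn f).scanl (fun p c => p + unitStep c) x

theorem exists_stepWalk_eq {x : Pt d} {t : List (Pt d)} (h : (x :: t).IsChain near) :
    ∃ f : Fin t.length → Fin d → Fin 3, stepWalk x f = x :: t := by
  induction t generalizing x with
  | nil => exact ⟨Fin.elim0, rfl⟩
  | cons y t ih =>
    rw [List.isChain_cons_cons] at h
    obtain ⟨c, rfl⟩ := exists_add_unitStep_eq h.1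
    obtain ⟨f, hf⟩ := ih h.2
    exact ⟨Fin.cons c f, by simpa [stepWalk, List.ofFn_succ] using hf⟩

theorem exists_stepWalk_toFinset_eq {R : Finset (Pt d)} {x : Pt d} (hx : x ∈ R)
    (hconn : connectedIn (R : Set (Pt d))) :
    ∃ f : Fin (2 * #R) → Fin d → Fin 3, (stepWalk x f).toFinset = R := by
  obtain ⟨t, hlen, hch, hR⟩ := exists_isChain_cons_toFinset_eq (r := near) hx
    fun y hy => ReflTransGen.mono (fun a b h => ⟨h.1, h.2.1, h.2.2.near⟩) _ _ (hconn x hx y hy)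
  obtain ⟨f, hf⟩ := exists_stepWalk_eq hch
  rw [← hlen]
  exact ⟨f, by rw [hf, hR]⟩

def complComponent (R : Set (Pt d)) (x : Pt d) : Set (Pt d) :=
  {y | ReflTransGen (fun a b => a ∉ R ∧ b ∉ R ∧ adj a b) x y}

theorem complComponent_subset {R : Set (Pt d)} {x y : Pt d} (h : y ∈ complComponent R x) :
    complComponent R y ⊆ complComponent R x :=
  fun _ => h.trans

theorem add_smul_mem_complComponent {R : Set (Pt d)} {x v : Pt d} (hv : v ≠ 0)
    (hv1 : ∀ i, |v i| ≤ 1) {k : ℕ} (hout : ∀ m < k, x + (m : ℤ) • v ∉ R) :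
    ∀ m < k, x + (m : ℤ) • v ∈ complComponent R x := by
  intro m hm
  induction m with
  | zero =>
    simp only [Nat.cast_zero, zero_smul, add_zero]
    exact ReflTransGen.refl
  | succ m ih =>
    refine (ih (by omega)).tail ⟨hout m (by omega), hout (m + 1) hm, ?_⟩
    simpa [add_smul, add_assoc] using adj_add_self (a := x + (m : ℤ) • v) hv hv1

theorem exists_add_smul_mem {R : Set (Pt d)} {x v : Pt d} (hv : v ≠ 0) (hv1 : ∀ i, |v i| ≤ 1)
    (hfin : (complComponent R x).Finite) : ∃ m : ℕ, x + (m : ℤ) • v ∈ R := by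
  by_contra! hout
  have hinj : Function.Injective fun m : ℕ => x + (m : ℤ) • v :=
    (add_right_injective x).comp ((smul_left_injective ℤ hv).comp Nat.cast_injective)
  exact Set.infinite_of_injective_forall_mem hinj
    (fun m => add_smul_mem_complComponent hv hv1 (fun m _ => hout m) m m.lt_succ_self) hfin

theorem abs_single_one_le (i j : Fin d) : |(Pi.single i 1 : Pt d) j| ≤ 1 := by
  rw [Pi.single_apply]; split <;> simp

theorem exists_add_smul_single_mem {R : Finset (Pt d)} {x : Pt d} {i j : Fin d} (hij : i ≠ j)
    (hx : x ∈ (R : Set (Pt d)) ∪ latticeInt R) :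
    ∃ q ≤ #R, x + (q : ℤ) • Pi.single i 1 ∈ R := by
  rcases hx with hxR | ⟨hxR, hfin⟩
  · exact ⟨0, Nat.zero_le _, by simpa using hxR⟩
  have hne (k : Fin d) : (Pi.single k 1 : Pt d) ≠ 0 := by simp
  have hhit : ∃ m : ℕ, x + (m : ℤ) • Pi.single i 1 ∈ R :=
    exists_add_smul_mem (hne i) (abs_single_one_le i) hfin
  refine ⟨Nat.find hhit, ?_, Nat.find_spec hhit⟩
  have hcomp := add_smul_mem_complComponent (R := R) (hne i) (abs_single_one_le i)
    fun m hm => Nat.find_min hhit hm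
  have hcol (m : Fin (Nat.find hhit)) : ∃ p ∈ R, p i = x i + m := by
    obtain ⟨m', hm'⟩ := exists_add_smul_mem (hne j) (abs_single_one_le j)
      (hfin.subset (complComponent_subset (hcomp m m.2)))
    exact ⟨_, hm', by simp [hij]⟩
  choose p hpR hpi using hcol
  simpa using card_le_card_of_injOn (s := univ) p (fun m _ => hpR m) fun a _ b _ hab => by
    have := hpi a; rw [hab, hpi b] at this; exact Fin.ext (by omega)

theorem exists_stepWalk_add_smul_single_toFinset_eq {R : Finset (Pt d)} {x : Pt d} {i j : Fin d}
    (hij : i ≠ j) (hconn : connectedIn (R : Set (Pt d)))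
    (hx : x ∈ (R : Set (Pt d)) ∪ latticeInt R) :
    ∃ q : Fin (#R + 1), ∃ f : Fin (2 * #R) → Fin d → Fin 3,
      (stepWalk (x + (q : ℤ) • Pi.single i 1) f).toFinset = R := by
  obtain ⟨q, hq, hroot⟩ := exists_add_smul_single_mem hij hx
  obtain ⟨f, hf⟩ := exists_stepWalk_toFinset_eq hroot hconn
  exact ⟨⟨q, by omega⟩, f, hf⟩

end LatticeWalk

theorem succ_mul_pow_le_exp_mul_sub_one_pow {X : ℝ} (hX : 9 ≤ X) (n : ℕ) :
    (n + 1) * X ^ (2 * n) ≤ Real.exp n * (X - 1) ^ (2 * n) := by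
  have hbase : 2 * X ^ 2 ≤ Real.exp 1 * (X - 1) ^ 2 := by
    nlinarith [Real.exp_one_gt_d9, sq_nonneg (X - 9)]
  have hn : (n : ℝ) + 1 ≤ 2 ^ n := by exact_mod_cast Nat.lt_two_pow_self
  calc (n + 1) * X ^ (2 * n) ≤ 2 ^ n * (X ^ 2) ^ n := by rw [pow_mul]; gcongr
    _ = (2 * X ^ 2) ^ n := by rw [mul_pow]
    _ ≤ (Real.exp 1 * (X - 1) ^ 2) ^ n := by gcongr
    _ = Real.exp n * (X - 1) ^ (2 * n) := by rw [mul_pow, Real.exp_one_pow, pow_mul]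

/-- For `d ≥ 2`, `|Γ(n)| ≤ e^n (3^d - 1)^(2n)`, where `Γ(n)` is the family of
connected subsets `R` of `ℤ^d` with `|R| = n` and `0 ∈ R ∪ Int R`. -/
theorem count_connected_sets_with_interior (d n : ℕ) (hd : 2 ≤ d) :
    (Set.ncard {R : Finset (Pt d) |
        connectedIn (↑R : Set (Pt d)) ∧ R.card = n ∧
          (0 : Pt d) ∈ (↑R : Set (Pt d)) ∪ latticeInt (↑R : Set (Pt d))} : ℝ)
      ≤ Real.exp n * ((3 : ℝ) ^ d - 1) ^ (2 * n) := by
  let walkSet (p : Fin (n + 1) × (Fin (2 * n) → Fin d → Fin 3)) : Finset (Pt d) :=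
    (stepWalk ((p.1 : ℤ) • Pi.single ⟨0, by omega⟩ 1) p.2).toFinset
  have h9 : (9 : ℝ) ≤ 3 ^ d := by
    calc (9 : ℝ) = 3 ^ 2 := by norm_num
      _ ≤ 3 ^ d := pow_le_pow_right₀ (by norm_num) hd
  calc _ ≤ ((univ.image walkSet).card : ℝ) := by
        norm_cast
        rw [← Set.ncard_coe_finset]
        refine Set.ncard_le_ncard ?_ (finite_toSet _)
        rintro R ⟨hconn, rfl, h0⟩
        obtain ⟨q, f, hf⟩ := exists_stepWalk_add_smul_single_toFinset_eq
          (i := ⟨0, by omega⟩) (j := ⟨1, by omega⟩) (by simp) hconn h0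
        exact mem_image.2 ⟨(q, f), mem_univ _, by simpa [walkSet] using hf⟩
    _ ≤ (((n + 1) * (3 ^ d) ^ (2 * n) : ℕ) : ℝ) := by
        exact_mod_cast card_image_le.trans (by simp)
    _ ≤ Real.exp n * ((3 : ℝ) ^ d - 1) ^ (2 * n) := by
        push_cast
        exact succ_mul_pow_le_exp_mul_sub_one_pow h9 n
end

section
/- Let R ⊆ ℤ^d be finite, ℓ ≥ 0, and let B_ℓ, B_ℓ' be two ℓ-cubes (translates of [0, 2^ℓ)^d ∩ ℤ^d on the 2^ℓ-scaled lattice) sharing a face. If |B_ℓ ∩ R| ≥ |B_ℓ|/2 and |B_ℓ' ∩ R| < |B_ℓ'|/2, then there is a constant b₀ = b₀(d), depending only on d, such that 2^{ℓ(d−1)} ≤ b₀ |∂R ∩ (B_ℓ ∪ B_ℓ')|, where ∂R denotes the external boundary {s ∉ R : dist_∞(s, R) = 1}. -/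
/-- The `ℓ`-cube based at `2^ℓ s`: `(∏_i [2^ℓ s_i, 2^ℓ (s_i+1))) ∩ ℤ^d`. -/
def cube {d : ℕ} (ℓ : ℕ) (s : Pt d) : Set (Pt d) :=
  {t | ∀ i, 2 ^ ℓ * s i ≤ t i ∧ t i < 2 ^ ℓ * (s i + 1)}

/-- The coarse-grained region `B_ℓ(R)`: the union of all `ℓ`-cubes containing at least half
of their `2^{ℓ d}` points in `R`. -/
def coarse {d : ℕ} (ℓ : ℕ) (R : Set (Pt d)) : Set (Pt d) :=
  ⋃ s ∈ {s : Pt d | 2 ^ (ℓ * d) ≤ 2 * (cube ℓ s ∩ R).ncard}, cube ℓ s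

section Paths

open Function Set

def adjWithin {d : ℕ} (P : Set (Pt d)) (u v : Pt d) : Prop := u ∈ P ∧ v ∈ P ∧ adj u v

lemma adj.symm {d : ℕ} {s t : Pt d} (h : adj s t) : adj t s :=
  ⟨h.1.symm, fun i => by simpa [abs_sub_comm] using h.2 i⟩

instance {d : ℕ} (P : Set (Pt d)) : Std.Symm (adjWithin P) :=
  ⟨fun _ _ ⟨hu, hv, h⟩ => ⟨hv, hu, h.symm⟩⟩

lemma adj_update_update_add_one {d : ℕ} (u : Pt d) (k : Fin d) (x : ℤ) :
    adj (update u k x) (update u k (x + 1)) := by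
  refine ⟨fun h => by simpa using congrFun h k, fun j => ?_⟩
  rcases eq_or_ne j k with rfl | hj
  · simp
  · simp [update_of_ne hj]

lemma exists_mem_extBoundary_of_reflTransGen {d : ℕ} {R P : Set (Pt d)} {a b : Pt d}
    (h : Relation.ReflTransGen (adjWithin P) a b) (ha : a ∈ R) (hb : b ∉ R) :
    ∃ v ∈ P, v ∈ extBoundary R := by
  induction h with
  | refl => exact absurd ha hb
  | @tail u v _ huv ih =>
    by_cases hu : u ∈ R
    · exact ⟨v, huv.2.1, hb, u, hu, huv.2.2.symm⟩
    · exact ih hu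

lemma reflTransGen_update {d : ℕ} {P : Set (Pt d)} (u : Pt d) (k : Fin d) {x y : ℤ}
    (hP : ∀ t ∈ uIcc x y, update u k t ∈ P) :
    Relation.ReflTransGen (adjWithin P) (update u k x) (update u k y) := by
  wlog hxy : x ≤ y generalizing x y
  · exact Std.Symm.symm _ _ (this (fun t ht => hP t (uIcc_comm x y ▸ ht)) (le_of_not_ge hxy))
  rw [uIcc_of_le hxy] at hP
  induction y, hxy using Int.leInduction with
  | base => exact .refl
  | succ y hxy ih =>
    have hy : y ∈ Icc x (y + 1) := ⟨hxy, by omega⟩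
    exact (ih fun t ht => hP t (Icc_subset_Icc_right (by omega) ht)).tail
      ⟨hP y hy, hP (y + 1) ⟨by omega, le_rfl⟩, adj_update_update_add_one u k y⟩

def pathSet {d : ℕ} (a b : Pt d) : Set (Pt d) :=
  {v | ∃ k, (∀ j < k, v j = b j) ∧ (∀ j, k < j → v j = a j) ∧ v k ∈ uIcc (a k) (b k)}

instance {d : ℕ} (a b v : Pt d) : Decidable (v ∈ pathSet a b) :=
  decidable_of_iff (∃ k, (∀ j < k, v j = b j) ∧ (∀ j, k < j → v j = a j) ∧
    a k ⊓ b k ≤ v k ∧ v k ≤ a k ⊔ b k) Iff.rfl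

def pathCorner {d : ℕ} (a b : Pt d) (n : ℕ) : Pt d := fun j => if (j : ℕ) < n then b j else a j

lemma update_pathCorner_mem_pathSet {d : ℕ} (a b : Pt d) (k : Fin d) {t : ℤ}
    (ht : t ∈ uIcc (a k) (b k)) : update (pathCorner a b k) k t ∈ pathSet a b := by
  refine ⟨k, fun j hj => ?_, fun j hj => ?_, by simpa using ht⟩
  · simp [update_of_ne hj.ne, pathCorner, Fin.lt_def.mp hj]
  · simp [update_of_ne hj.ne', pathCorner, (Fin.lt_def.mp hj).not_gt]

lemma reflTransGen_pathSet {d : ℕ} (a b : Pt d) :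
    Relation.ReflTransGen (adjWithin (pathSet a b)) a b := by
  have key : ∀ n ≤ d, Relation.ReflTransGen (adjWithin (pathSet a b)) a (pathCorner a b n) := by
    intro n hn
    induction n with
    | zero => simpa [pathCorner] using .refl
    | succ n ih =>
      let k : Fin d := ⟨n, hn⟩
      have hstart : update (pathCorner a b n) k (a k) = pathCorner a b n := by
        simp [k, pathCorner]
      have hend : update (pathCorner a b n) k (b k) = pathCorner a b (n + 1) := by
        funext j
        rcases eq_or_ne j k with rfl | hj
        · simp [k, pathCorner]
        · have hjn : (j : ℕ) ≠ n := fun h => hj (Fin.ext h)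
          simp only [update_of_ne hj, pathCorner]
          split_ifs <;> first | rfl | omega
      have hseg := reflTransGen_update (pathCorner a b n) k
        (fun t ht => update_pathCorner_mem_pathSet a b k ht)
      rw [hstart, hend] at hseg
      exact (ih (by omega)).trans hseg
  have hb : pathCorner a b d = b := funext fun j => if_pos j.isLt
  simpa only [hb] using key d le_rfl

lemma pathSet_subset_uIcc {d : ℕ} (a b : Pt d) : pathSet a b ⊆ uIcc a b := by
  rintro v ⟨k, hlt, hgt, hk⟩
  rw [← pi_univ_uIcc]
  intro j _
  rcases lt_trichotomy j k with hj | rfl | hj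
  · simp [hlt j hj]
  · exact hk
  · simp [hgt j hj]

end Paths

section Counting

open Finset

lemma card_filter_piFinset_eqOn_le {ι α : Type*} [Fintype ι] [DecidableEq ι] [DecidableEq α]
    {I : ι → Finset α} {n : ℕ} (hI : ∀ j, #(I j) ≤ n) (p : ι → Prop) [DecidablePred p]
    (v : ι → α) :
    #{a ∈ Fintype.piFinset I | ∀ j, p j → a j = v j} ≤ n ^ #{j | ¬ p j} := by
  calc #{a ∈ Fintype.piFinset I | ∀ j, p j → a j = v j}
      ≤ #(Fintype.piFinset fun j => if p j then {v j} else I j) := by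
        refine card_le_card fun a ha => ?_
        simp only [mem_filter, Fintype.mem_piFinset] at ha ⊢
        intro j
        split_ifs with hj
        · simp [ha.2 j hj]
        · exact ha.1 j
    _ = ∏ j, if p j then 1 else #(I j) := by
        rw [Fintype.card_piFinset]
        exact prod_congr rfl fun j _ => by split_ifs <;> simp
    _ ≤ ∏ j, if ¬ p j then n else 1 := by
        refine prod_le_prod' fun j _ => ?_
        split_ifs <;> simp_all
    _ = n ^ #{j | ¬ p j} := by rw [prod_ite, prod_const, prod_const_one, mul_one]

lemma card_filter_not_lt_add_card_filter_not_gt {d : ℕ} (k : Fin d) :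
    #{j | ¬ k < j} + #{j | ¬ j < k} = d + 1 := by
  rw [← card_union_add_card_inter, ← filter_or, ← filter_and]
  have hunion : ({j | ¬ k < j ∨ ¬ j < k} : Finset (Fin d)) = univ :=
    filter_true_of_mem fun j _ => by by_contra! h; exact lt_asymm h.1 h.2
  have hinter : ({j | ¬ k < j ∧ ¬ j < k} : Finset (Fin d)) = {k} := by
    ext j; simp [le_antisymm_iff, and_comm]
  rw [hunion, hinter, card_univ, Fintype.card_fin, card_singleton]

lemma card_filter_mem_pathSet_le {d n : ℕ} {I J : Fin d → Finset ℤ} (hI : ∀ j, #(I j) ≤ n)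
    (hJ : ∀ j, #(J j) ≤ n) (v : Pt d) :
    #{p ∈ Fintype.piFinset I ×ˢ Fintype.piFinset J | v ∈ pathSet p.1 p.2} ≤ d * n ^ (d + 1) := by
  let fiber : Fin d → Finset (Pt d × Pt d) := fun k =>
    {a ∈ Fintype.piFinset I | ∀ j, k < j → a j = v j} ×ˢ
      {b ∈ Fintype.piFinset J | ∀ j, j < k → b j = v j}
  have hsub : {p ∈ Fintype.piFinset I ×ˢ Fintype.piFinset J | v ∈ pathSet p.1 p.2}
      ⊆ univ.biUnion fiber := by
    intro p hp
    obtain ⟨hp, k, hlt, hgt, -⟩ := mem_filter.mp hp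
    rw [mem_product] at hp
    exact mem_biUnion.mpr ⟨k, mem_univ k, mem_product.mpr
      ⟨mem_filter.mpr ⟨hp.1, fun j hj => (hgt j hj).symm⟩,
        mem_filter.mpr ⟨hp.2, fun j hj => (hlt j hj).symm⟩⟩⟩
  have hfiber : ∀ k, #(fiber k) ≤ n ^ (d + 1) := fun k => by
    rw [card_product, ← card_filter_not_lt_add_card_filter_not_gt k, pow_add]
    -- `convert` reconciles `Nat.decidableForallFin` with `Fintype.decidableForallFintype`
    exact Nat.mul_le_mul (by convert card_filter_piFinset_eqOn_le hI (k < ·) v)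
      (by convert card_filter_piFinset_eqOn_le hJ (· < k) v)
  calc _ ≤ #(univ.biUnion fiber) := card_le_card hsub
    _ ≤ ∑ k, #(fiber k) := card_biUnion_le
    _ ≤ ∑ _k : Fin d, n ^ (d + 1) := sum_le_sum fun k _ => hfiber k
    _ = d * n ^ (d + 1) := by simp

lemma card_mul_card_le_of_forall_exists_mem_pathSet {d n : ℕ} {I J : Fin d → Finset ℤ}
    (hI : ∀ j, #(I j) ≤ n) (hJ : ∀ j, #(J j) ≤ n) {S T D : Finset (Pt d)}
    (hS : S ⊆ Fintype.piFinset I) (hT : T ⊆ Fintype.piFinset J)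
    (hD : ∀ a ∈ S, ∀ b ∈ T, ∃ v ∈ D, v ∈ pathSet a b) :
    #S * #T ≤ #D * (d * n ^ (d + 1)) := by
  have := card_mul_le_card_mul (s := S ×ˢ T) (t := D) (fun p v => v ∈ pathSet p.1 p.2)
    (m := 1) (n := d * n ^ (d + 1)) (fun p hp => ?_) (fun v _ => ?_)
  · rwa [mul_one, card_product] at this
  · obtain ⟨v, hv, hvp⟩ := hD p.1 (mem_product.mp hp).1 p.2 (mem_product.mp hp).2
    exact card_pos.mpr ⟨v, (mem_bipartiteAbove _).mpr ⟨hv, hvp⟩⟩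
  · exact (card_le_card (filter_subset_filter _ (product_subset_product hS hT))).trans
      (card_filter_mem_pathSet_le hI hJ v)

end Counting

section Cubes

open Function Set

noncomputable def cubeF {d : ℕ} (ℓ : ℕ) (s : Pt d) : Finset (Pt d) :=
  Fintype.piFinset fun j => Finset.Ico (2 ^ ℓ * s j) (2 ^ ℓ * (s j + 1))

lemma coe_cubeF {d : ℕ} (ℓ : ℕ) (s : Pt d) : (cubeF ℓ s : Set (Pt d)) = cube ℓ s := by
  ext t
  simp [cubeF, cube]

lemma card_Ico_two_pow_mul (ℓ : ℕ) (x : ℤ) :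
    (Finset.Ico (2 ^ ℓ * x) (2 ^ ℓ * (x + 1))).card = 2 ^ ℓ := by
  rw [Int.card_Ico, mul_add, mul_one, add_sub_cancel_left]
  exact_mod_cast Int.toNat_natCast (2 ^ ℓ)

lemma cube_finite {d : ℕ} (ℓ : ℕ) (s : Pt d) : (cube ℓ s).Finite :=
  coe_cubeF ℓ s ▸ (cubeF ℓ s).finite_toSet

lemma ncard_cube {d : ℕ} (ℓ : ℕ) (s : Pt d) : (cube ℓ s).ncard = 2 ^ (ℓ * d) := by
  rw [← coe_cubeF, ncard_coe_finset, cubeF, Fintype.card_piFinset,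
    Finset.prod_congr rfl fun j _ => card_Ico_two_pow_mul ℓ (s j), Finset.prod_const,
    Finset.card_univ, Fintype.card_fin, pow_mul]

lemma uIcc_subset_cube_union_cube_update {d : ℕ} (ℓ : ℕ) (s : Pt d) (i : Fin d) {a b : Pt d}
    (ha : a ∈ cube ℓ s) (hb : b ∈ cube ℓ (update s i (s i + 1))) :
    uIcc a b ⊆ cube ℓ s ∪ cube ℓ (update s i (s i + 1)) := by
  intro v hv
  rw [← pi_univ_uIcc] at hv
  have hv' : ∀ j, min (a j) (b j) ≤ v j ∧ v j ≤ max (a j) (b j) := fun j => hv j (mem_univ j)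
  have hb' : ∀ j, j ≠ i → 2 ^ ℓ * s j ≤ b j ∧ b j < 2 ^ ℓ * (s j + 1) := fun j hj => by
    simpa [update_of_ne hj] using hb j
  have hbi : 2 ^ ℓ * s i + 2 ^ ℓ ≤ b i ∧ b i < 2 ^ ℓ * s i + 2 ^ ℓ + 2 ^ ℓ := by
    have := hb i; simp only [update_self, mul_add] at this; omega
  have hai : 2 ^ ℓ * s i ≤ a i ∧ a i < 2 ^ ℓ * s i + 2 ^ ℓ := by
    have := ha i; rw [mul_add] at this; omega
  by_cases hvi : v i < 2 ^ ℓ * (s i + 1)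
  · left
    intro j
    rcases eq_or_ne j i with rfl | hj
    · have := hv' j; omega
    · have := hv' j; have := ha j; have := hb' j hj; omega
  · right
    intro j
    rcases eq_or_ne j i with rfl | hj
    · have := hv' j; simp only [update_self, mul_add] at hvi ⊢; omega
    · have := hv' j; have := ha j; have := hb' j hj; simp only [update_of_ne hj]; omega

lemma ncard_inter_mul_ncard_sdiff_le_ncard_extBoundary {d : ℕ} (R : Set (Pt d)) (ℓ : ℕ)
    (s : Pt d) (i : Fin d) :
    (cube ℓ s ∩ R).ncard * (cube ℓ (update s i (s i + 1)) \ R).ncard ≤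
      (extBoundary R ∩ (cube ℓ s ∪ cube ℓ (update s i (s i + 1)))).ncard *
        (d * (2 ^ ℓ) ^ (d + 1)) := by
  set s' := update s i (s i + 1)
  have hS := (cube_finite ℓ s).inter_of_left R
  have hT := (cube_finite ℓ s').sdiff (t := R)
  have hD := ((cube_finite ℓ s).union (cube_finite ℓ s')).inter_of_right (extBoundary R)
  rw [ncard_eq_toFinset_card _ hS, ncard_eq_toFinset_card _ hT, ncard_eq_toFinset_card _ hD]
  refine card_mul_card_le_of_forall_exists_mem_pathSet
    (fun j => (card_Ico_two_pow_mul ℓ (s j)).le) (fun j => (card_Ico_two_pow_mul ℓ (s' j)).le)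
    (Finite.toFinset_subset.mpr ?_) (Finite.toFinset_subset.mpr ?_) fun a ha b hb => ?_
  · exact (coe_cubeF ℓ s).symm ▸ inter_subset_left
  · exact (coe_cubeF ℓ s').symm ▸ sdiff_subset
  · rw [Finite.mem_toFinset] at ha hb
    obtain ⟨v, hvpath, hv⟩ :=
      exists_mem_extBoundary_of_reflTransGen (reflTransGen_pathSet a b) ha.2 hb.2
    refine ⟨v, (Finite.mem_toFinset _).mpr ⟨hv, ?_⟩, hvpath⟩
    exact uIcc_subset_cube_union_cube_update ℓ s i ha.1 hb.1 (pathSet_subset_uIcc a b hvpath)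

end Cubes

/-- if an `ℓ`-cube is at least half inside a finite `R ⊆ ℤ^d` and a
face-adjacent `ℓ`-cube is less than half inside `R`, then
`2^{ℓ(d-1)} ≤ b₀ |∂R ∩ (B_ℓ ∪ B_ℓ')|` for a constant `b₀` depending only on `d`. -/
theorem interface_forces_boundary (d : ℕ) (hd : 1 ≤ d) :
    ∃ b₀ : ℕ, 0 < b₀ ∧
      ∀ (R : Set (Pt d)), R.Finite → ∀ (ℓ : ℕ) (s : Pt d) (i : Fin d),
        2 ^ (ℓ * d) ≤ 2 * (cube ℓ s ∩ R).ncard →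
        2 * (cube ℓ (Function.update s i (s i + 1)) ∩ R).ncard < 2 ^ (ℓ * d) →
        2 ^ (ℓ * (d - 1))
          ≤ b₀ * (extBoundary R ∩ (cube ℓ s ∪ cube ℓ (Function.update s i (s i + 1)))).ncard := by
  refine ⟨4 * d, by omega, fun R _ ℓ s i hB hB' => ?_⟩
  have hsplit :=
    Set.ncard_inter_add_ncard_sdiff_eq_ncard (cube ℓ (Function.update s i (s i + 1))) R
      (cube_finite ℓ _)
  have hcount := ncard_inter_mul_ncard_sdiff_le_ncard_extBoundary R ℓ s i
  set S := (cube ℓ s ∩ R).ncard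
  set T := (cube ℓ (Function.update s i (s i + 1)) \ R).ncard
  set D := (extBoundary R ∩ (cube ℓ s ∪ cube ℓ (Function.update s i (s i + 1)))).ncard
  rw [ncard_cube] at hsplit
  have hT : 2 ^ (ℓ * d) ≤ 2 * T := by omega
  rw [pow_mul] at hB hT ⊢
  refine Nat.le_of_mul_le_mul_right ?_ (show 0 < (2 ^ ℓ) ^ (d + 1) by positivity)
  calc (2 ^ ℓ) ^ (d - 1) * (2 ^ ℓ) ^ (d + 1) = (2 ^ ℓ) ^ d * (2 ^ ℓ) ^ d := by
        rw [← pow_add, ← pow_add]; congr 1; omega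
    _ ≤ (2 * S) * (2 * T) := Nat.mul_le_mul hB hT
    _ = 4 * (S * T) := by ring
    _ ≤ 4 * (D * (d * (2 ^ ℓ) ^ (d + 1))) := Nat.mul_le_mul_left 4 hcount
    _ = 4 * d * D * (2 ^ ℓ) ^ (d + 1) := by ring
end

section
/- In ℤ^d with d ≥ 3, the series Σ_{ℓ=1}^∞ √ℓ · 2^{−ℓ(d−2)/2} converges; consequently the Dudley entropy integral ∫₀^∞ √(log N(C̄₀(n), d̄, r)) dr is bounded by b₃ b₅ ν n for a constant b₅ = b₅(d), given the covering number bounds N(C̄₀(n), d̄, ν b₃ 2^{ℓ/2} n^{1/2}) ≤ exp(b₄ ℓ n / 2^{ℓ(d−1)}) for ℓ ≥ 1 and N(C̄₀(n), d̄, 0+) ≤ e^n(3^d−1)^{2n}. -/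
open MeasureTheory Real

/-- The covering number `N(T, d, r)`: the least cardinality of an `r`-net of `T`. -/
noncomputable def coveringNumber (T : Type*) [MetricSpace T] (r : ℝ) : ℕ :=
  sInf {k : ℕ | ∃ N : Finset T, N.card = k ∧ ∀ t : T, ∃ u ∈ N, dist t u ≤ r}

lemma covSet_nonempty (T : Type*) [MetricSpace T] [Fintype T] {r : ℝ} (hr : 0 ≤ r) :
    {k : ℕ | ∃ N : Finset T, N.card = k ∧ ∀ t : T, ∃ u ∈ N, dist t u ≤ r}.Nonempty :=
  ⟨(Finset.univ : Finset T).card, Finset.univ, rfl,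
    fun t => ⟨t, Finset.mem_univ t, by simpa using hr⟩⟩

lemma coveringNumber_anti (T : Type*) [MetricSpace T] [Fintype T] {r s : ℝ}
    (hr : 0 ≤ r) (hrs : r ≤ s) : coveringNumber T s ≤ coveringNumber T r := by
  obtain ⟨N, hcard, hN⟩ := Nat.sInf_mem (covSet_nonempty T hr)
  apply Nat.sInf_le
  exact ⟨N, hcard, fun t => by obtain ⟨u, hu, hd⟩ := hN t; exact ⟨u, hu, hd.trans hrs⟩⟩

/-- log of a natural cast bounded by log of a real ≥ 1. -/
lemma log_cast_le {k : ℕ} {y : ℝ} (hy : 1 ≤ y) (h : (k : ℝ) ≤ y) :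
    Real.log k ≤ Real.log y := by
  rcases Nat.eq_zero_or_pos k with hk | hk
  · simp [hk]; exact Real.log_nonneg hy
  · exact Real.log_le_log (by exact_mod_cast hk) h

lemma two_rpow_half_nat (k : ℕ) : (2:ℝ) ^ ((k:ℝ)/2) = Real.sqrt ((2:ℝ)^k) := by
  rw [Real.sqrt_eq_rpow, ← Real.rpow_natCast (2:ℝ) k, ← Real.rpow_mul (by norm_num)]
  ring_nf

lemma two_rpow_half_nat' (k : ℕ) : (2:ℝ) ^ ((k:ℝ)/2) = Real.sqrt 2 ^ k := by
  rw [Real.sqrt_eq_rpow, ← Real.rpow_natCast ((2:ℝ) ^ ((1:ℝ)/2)) k,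
    ← Real.rpow_mul (by norm_num)]
  ring_nf

lemma two_rpow_neg_half_nat (k : ℕ) :
    (2:ℝ) ^ (-(k:ℝ)/2) = Real.sqrt (((2:ℝ)^k)⁻¹) := by
  rw [Real.sqrt_inv, ← two_rpow_half_nat, ← Real.rpow_neg (by norm_num)]
  ring_nf

lemma le_of_sq_le_sq' {x y : ℝ} (hy : 0 ≤ y) (h : x^2 ≤ y^2) : x ≤ y := by
  nlinarith [sq_nonneg (x - y), sq_nonneg (x + y)]

lemma summable_aux (d : ℕ) (hd : 3 ≤ d) :
    Summable (fun ℓ : ℕ => Real.sqrt ℓ * (2 : ℝ) ^ (-(ℓ : ℝ) * ((d : ℝ) - 2) / 2)) := by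
  have hr : ‖(2:ℝ) ^ (-(1:ℝ)/2)‖ < 1 := by
    rw [Real.norm_eq_abs, abs_of_pos (rpow_pos_of_pos two_pos _)]
    exact rpow_lt_one_of_one_lt_of_neg one_lt_two (by norm_num)
  have hs := summable_pow_mul_geometric_of_norm_lt_one 1 hr
  refine Summable.of_nonneg_of_le (fun ℓ => by positivity) (fun ℓ => ?_) hs
  have h1 : Real.sqrt ℓ ≤ (ℓ:ℝ) ^ 1 := by
    rw [pow_one]
    calc Real.sqrt ℓ ≤ Real.sqrt ((ℓ:ℝ)^2) := by
          apply Real.sqrt_le_sqrt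
          exact_mod_cast Nat.le_self_pow (two_ne_zero) ℓ
      _ = (ℓ:ℝ) := Real.sqrt_sq (Nat.cast_nonneg ℓ)
  have h2 : (2:ℝ) ^ (-(ℓ:ℝ) * ((d:ℝ) - 2) / 2) ≤ ((2:ℝ) ^ (-(1:ℝ)/2)) ^ ℓ := by
    rw [← Real.rpow_natCast ((2:ℝ) ^ (-(1:ℝ)/2)) ℓ, ← Real.rpow_mul (by norm_num)]
    apply Real.rpow_le_rpow_of_exponent_le one_le_two
    have hd2 : (1:ℝ) ≤ (d:ℝ) - 2 := by
      have : (3:ℝ) ≤ d := by exact_mod_cast hd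
      linarith
    have hℓ : (0:ℝ) ≤ ℓ := Nat.cast_nonneg ℓ
    nlinarith
  exact mul_le_mul h1 h2 (by positivity) (by positivity)

set_option maxHeartbeats 1000000 in
/-- for `d ≥ 3` the series `Σ_ℓ √ℓ · 2^{-ℓ(d-2)/2}` converges; consequently,
given the covering number bounds `N(C̄₀(n), d̄, ν b₃ 2^{ℓ/2} √n) ≤ exp (b₄ ℓ n / 2^{ℓ(d-1)})`
for `ℓ ≥ 1` and `N(C̄₀(n), d̄, r) ≤ e^n (3^d - 1)^{2n}` for all `r > 0`, the Dudley entropy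
integral `∫₀^∞ √(log N) dr` is bounded by `b₃ b₅ ν n` for a constant `b₅ = b₅(d)`. -/
theorem entropy_integral_bound (d : ℕ) (hd : 3 ≤ d) (b₄ : ℝ) (hb₄ : 0 < b₄) :
    Summable (fun ℓ : ℕ => Real.sqrt ℓ * (2 : ℝ) ^ (-(ℓ : ℝ) * ((d : ℝ) - 2) / 2)) ∧
    ∃ b₅ : ℝ, 0 < b₅ ∧
      ∀ (T : Type) (mT : MetricSpace T) (fT : Fintype T) (neT : Nonempty T)
        (n : ℕ) (ν b₃ : ℝ), 0 < ν → 0 < b₃ → 1 ≤ n →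
        (∀ ℓ : ℕ, 1 ≤ ℓ →
          ((coveringNumber T (ν * b₃ * (2 : ℝ) ^ ((ℓ : ℝ) / 2) * Real.sqrt n) : ℝ)
            ≤ Real.exp (b₄ * ℓ * n / 2 ^ (ℓ * (d - 1))))) →
        (∀ r : ℝ, 0 < r →
          ((coveringNumber T r : ℝ) ≤ Real.exp n * ((3 : ℝ) ^ d - 1) ^ (2 * n))) →
        (∫ r in Set.Ioi (0 : ℝ), Real.sqrt (Real.log (coveringNumber T r)))
          ≤ b₃ * b₅ * ν * n := by
  classical
  have hsum := summable_aux d hd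
  refine ⟨hsum, ?_⟩
  set g : ℕ → ℝ := fun ℓ : ℕ => Real.sqrt ℓ * (2 : ℝ) ^ (-(ℓ : ℝ) * ((d : ℝ) - 2) / 2)
    with hg
  set S : ℝ := ∑' ℓ, g ℓ with hSdef
  have hS : 0 ≤ S := tsum_nonneg (fun ℓ => by positivity)
  set L : ℝ := Real.log ((3:ℝ)^d - 1) with hLdef
  have h3d : (2:ℝ) ≤ (3:ℝ)^d - 1 := by
    have : (3:ℝ)^3 ≤ (3:ℝ)^d := pow_le_pow_right₀ (by norm_num) hd
    norm_num at this ⊢; linarith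
  have hL : 0 ≤ L := Real.log_nonneg (by linarith)
  refine ⟨Real.sqrt 2 * Real.sqrt (1 + 2*L) + Real.sqrt (2*b₄) * S + 1, ?_, ?_⟩
  · have := Real.sqrt_nonneg 2
    have := Real.sqrt_nonneg (1 + 2*L)
    have := Real.sqrt_nonneg (2*b₄)
    nlinarith
  intro T mT fT neT n ν b₃ hν hb₃ hn h1 h2
  set b₅ : ℝ := Real.sqrt 2 * Real.sqrt (1 + 2*L) + Real.sqrt (2*b₄) * S + 1 with hb₅def
  -- the radii
  set ρ : ℕ → ℝ := fun m => if m = 0 then 0 else ν * b₃ * (2:ℝ) ^ ((m:ℝ)/2) * Real.sqrt n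
    with hρdef
  have hn' : (1:ℝ) ≤ n := by exact_mod_cast hn
  have hsn : 0 < Real.sqrt n := Real.sqrt_pos.2 (by linarith)
  have hρ0 : ρ 0 = 0 := by simp [hρdef]
  have hρpos : ∀ m : ℕ, m ≠ 0 → 0 < ρ m := by
    intro m hm
    simp only [hρdef, if_neg hm]
    positivity
  have hρnonneg : ∀ m : ℕ, 0 ≤ ρ m := by
    intro m
    rcases Nat.eq_zero_or_pos m with h | h
    · simp [h, hρ0]
    · exact (hρpos m (Nat.pos_iff_ne_zero.1 h)).le
  have hρmono : ∀ m : ℕ, ρ m ≤ ρ (m+1) := by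
    intro m
    rcases Nat.eq_zero_or_pos m with h | h
    · rw [h, hρ0]; exact hρnonneg 1
    · have hm : m ≠ 0 := Nat.pos_iff_ne_zero.1 h
      simp only [hρdef, if_neg hm, if_neg (Nat.succ_ne_zero m)]
      have hle : (2:ℝ) ^ ((m:ℝ)/2) ≤ (2:ℝ) ^ ((((m+1):ℕ):ℝ)/2) := by
        apply Real.rpow_le_rpow_of_exponent_le one_le_two
        push_cast; linarith
      have h0 : 0 ≤ ν * b₃ := (mul_pos hν hb₃).le
      exact mul_le_mul_of_nonneg_right (mul_le_mul_of_nonneg_left hle h0) hsn.le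
  -- the bound function
  set a : ℕ → ℝ := fun m => if m = 0 then Real.sqrt (n * (1 + 2*L))
      else Real.sqrt (b₄ * m * n / 2 ^ (m * (d-1))) with hadef
  have ha_nonneg : ∀ m, 0 ≤ a m := by
    intro m; simp only [hadef]; split <;> exact Real.sqrt_nonneg _
  -- pointwise bound on each piece
  have hpiece : ∀ m : ℕ, ∀ r ∈ Set.Ioc (ρ m) (ρ (m+1)),
      Real.sqrt (Real.log (coveringNumber T r)) ≤ a m := by
    intro m r hr
    rcases Nat.eq_zero_or_pos m with h | h
    · subst h
      have hr0 : 0 < r := by rw [← hρ0]; exact hr.1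
      have hy : (1:ℝ) ≤ Real.exp n * ((3:ℝ)^d - 1) ^ (2*n) := by
        have h1' : (1:ℝ) ≤ Real.exp n := Real.one_le_exp (by positivity)
        have h2' : (1:ℝ) ≤ ((3:ℝ)^d - 1) ^ (2*n) := one_le_pow₀ (by linarith)
        nlinarith
      have hlog := log_cast_le hy (h2 r hr0)
      have hlogy : Real.log (Real.exp n * ((3:ℝ)^d - 1) ^ (2*n)) = n * (1 + 2*L) := by
        rw [Real.log_mul (Real.exp_ne_zero _) (by positivity), Real.log_exp, Real.log_pow]
        push_cast
        ring
      simp only [hadef, if_pos rfl]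
      apply Real.sqrt_le_sqrt
      rw [← hlogy]; exact hlog
    · have hm : m ≠ 0 := Nat.pos_iff_ne_zero.1 h
      have hbound := h1 m h
      have hρm : ρ m = ν * b₃ * (2:ℝ) ^ ((m:ℝ)/2) * Real.sqrt n := by
        simp [hρdef, hm]
      have hanti : (coveringNumber T r : ℝ) ≤ coveringNumber T (ρ m) := by
        exact_mod_cast coveringNumber_anti T (hρnonneg m) hr.1.le
      have hle : (coveringNumber T r : ℝ) ≤ Real.exp (b₄ * m * n / 2 ^ (m * (d-1))) := by
        rw [hρm] at hanti; exact hanti.trans hbound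
      have hy : (1:ℝ) ≤ Real.exp (b₄ * m * n / 2 ^ (m * (d-1))) :=
        Real.one_le_exp (by positivity)
      have hlog := log_cast_le hy hle
      rw [Real.log_exp] at hlog
      simp only [hadef, if_neg hm]
      exact Real.sqrt_le_sqrt hlog
  -- coverage
  have hcover : Set.Ioi (0:ℝ) ⊆ ⋃ m, Set.Ioc (ρ m) (ρ (m+1)) := by
    intro x hx
    have hx0 : 0 < x := hx
    have hgrow : ∃ m, x ≤ ρ m := by
      set c : ℝ := ν * b₃ * Real.sqrt n * (Real.sqrt 2 - 1) with hc
      have hsqrt2 : 1 < Real.sqrt 2 := by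
        rw [show (1:ℝ) = Real.sqrt 1 by simp]
        exact Real.sqrt_lt_sqrt (by norm_num) (by norm_num)
      have hc0 : 0 < c := by
        have := mul_pos (mul_pos hν hb₃) hsn
        nlinarith
      obtain ⟨M, hM⟩ := exists_nat_gt (x / c)
      refine ⟨M + 1, ?_⟩
      have hρM : ρ (M+1) = ν * b₃ * (2:ℝ) ^ ((((M+1):ℕ):ℝ)/2) * Real.sqrt n := by
        simp [hρdef]
      have hpow : c * ((M:ℝ)+1) ≤ ρ (M+1) := by
        rw [hρM, two_rpow_half_nat' (M+1)]
        have hber : 1 + ((M+1:ℕ):ℝ) * (Real.sqrt 2 - 1)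
            ≤ (1 + (Real.sqrt 2 - 1)) ^ (M+1) := by
          apply one_add_mul_le_pow
          linarith
        rw [show (1 + (Real.sqrt 2 - 1)) = Real.sqrt 2 by ring] at hber
        push_cast at hber ⊢
        have h0 : (0:ℝ) ≤ ν * b₃ * Real.sqrt n := by positivity
        have hmul := mul_le_mul_of_nonneg_left hber h0
        have hcc : c * ((M:ℝ)+1) = ν * b₃ * Real.sqrt n * (((M:ℝ)+1) * (Real.sqrt 2 - 1)) := by
          rw [hc]; ring
        rw [hcc]
        nlinarith
      have hx' : x ≤ c * ((M:ℝ)+1) := by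
        rw [div_lt_iff₀ hc0] at hM
        nlinarith
      linarith
    have hex : ∃ m, x ≤ ρ m := hgrow
    have hfind := Nat.find_spec hex
    set k := Nat.find hex with hk
    have hk1 : k ≠ 0 := by
      intro h0
      rw [h0, hρ0] at hfind
      linarith
    obtain ⟨j, hj⟩ := Nat.exists_eq_succ_of_ne_zero hk1
    refine Set.mem_iUnion.2 ⟨j, ?_, ?_⟩
    · have := Nat.find_min hex (by omega : j < k)
      push_neg at this
      exact this
    · rw [show j + 1 = k from by omega]
      exact hfind
  -- the comparison sequence
  set C : ℝ := ν * b₃ * n * Real.sqrt (2*b₄) with hC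
  set v : ℕ → ℝ := fun m => if m = 0 then a 0 * (ρ 1 - ρ 0) else C * g m with hv
  have hg_nonneg : ∀ m, 0 ≤ g m := fun m => by simp only [hg]; positivity
  have hC0 : 0 ≤ C := by positivity
  have hv_nonneg : ∀ m, 0 ≤ v m := by
    intro m
    simp only [hv]
    split
    · have := hρmono 0
      have := ha_nonneg 0
      rw [hρ0] at *
      nlinarith [hρnonneg 1, ha_nonneg 0]
    · exact mul_nonneg hC0 (hg_nonneg m)
  -- key comparison
  have hkey : ∀ m : ℕ, a m * (ρ (m+1) - ρ m) ≤ v m := by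
    intro m
    rcases Nat.eq_zero_or_pos m with h | h
    · subst h
      simp only [hv, if_pos rfl]
      norm_num
    · have hm : m ≠ 0 := Nat.pos_iff_ne_zero.1 h
      have step1 : a m * (ρ (m+1) - ρ m) ≤ a m * ρ (m+1) :=
        mul_le_mul_of_nonneg_left (by linarith [hρnonneg m]) (ha_nonneg m)
      refine step1.trans ?_
      simp only [hv, if_neg hm]
      -- rewrite both sides in terms of square roots
      have hXdef : a m * ρ (m+1) = Real.sqrt (b₄ * m * n / 2 ^ (m * (d-1)))
          * (ν * b₃ * Real.sqrt ((2:ℝ)^(m+1)) * Real.sqrt n) := by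
        simp only [hadef, hρdef, if_neg hm, if_neg (Nat.succ_ne_zero m)]
        rw [two_rpow_half_nat (m+1)]
      have hE : (2:ℝ)^(-(m:ℝ)*((d:ℝ)-2)/2) = Real.sqrt (((2:ℝ)^(m*(d-2)))⁻¹) := by
        rw [← two_rpow_neg_half_nat (m*(d-2))]
        congr 1
        push_cast [Nat.cast_sub (by omega : 2 ≤ d)]
        ring
      have hYdef : C * g m = ν * b₃ * n * Real.sqrt (2*b₄)
          * (Real.sqrt m * Real.sqrt (((2:ℝ)^(m*(d-2)))⁻¹)) := by
        simp only [hC, hg, hE]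
      rw [hXdef, hYdef]
      have hsplit : (2:ℝ)^(m*(d-1)) = 2^(m*(d-2)) * 2^m := by
        rw [← pow_add]
        congr 1
        have hdd : d - 1 = (d-2) + 1 := by omega
        rw [hdd, Nat.mul_add, mul_one]
      set A : ℝ := b₄ * m * n / 2 ^ (m * (d-1)) with hA
      set B : ℝ := (2:ℝ)^(m+1) with hB
      set E : ℝ := ((2:ℝ)^(m*(d-2)))⁻¹ with hEE
      have hA0 : 0 ≤ A := by rw [hA]; positivity
      have hB0 : 0 ≤ B := by rw [hB]; positivity
      have hE0 : 0 ≤ E := by rw [hEE]; positivity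
      have hnum : A * B * ((n:ℝ)) ≤ (n:ℝ)^2 * (2*b₄) * m * E := by
        apply le_of_eq
        rw [hA, hB, hEE, hsplit, pow_succ]
        have hp1 : (0:ℝ) < 2^(m*(d-2)) := by positivity
        have hp2 : (0:ℝ) < 2^m := by positivity
        field_simp
      calc Real.sqrt A * (ν * b₃ * Real.sqrt B * Real.sqrt n)
          = ν * b₃ * (Real.sqrt A * Real.sqrt B * Real.sqrt n) := by ring
        _ = ν * b₃ * Real.sqrt (A * B * n) := by
            rw [← Real.sqrt_mul hA0, ← Real.sqrt_mul (by positivity)]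
        _ ≤ ν * b₃ * Real.sqrt ((n:ℝ)^2 * (2*b₄) * m * E) := by
            apply mul_le_mul_of_nonneg_left (Real.sqrt_le_sqrt hnum) (by positivity)
        _ = ν * b₃ * (Real.sqrt ((n:ℝ)^2) * Real.sqrt (2*b₄) * Real.sqrt m * Real.sqrt E) := by
            rw [← Real.sqrt_mul (by positivity), ← Real.sqrt_mul (by positivity),
              ← Real.sqrt_mul (by positivity)]
        _ = ν * b₃ * n * Real.sqrt (2*b₄) * (Real.sqrt m * Real.sqrt E) := by
            rw [Real.sqrt_sq (by positivity)]
            ring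
  -- summability of v
  have hvshift : ∀ m : ℕ, v (m+1) = C * g (m+1) := by
    intro m; simp only [hv, if_neg (Nat.succ_ne_zero m)]
  have hsumv : Summable v := by
    have hshift : Summable (fun m => v (m+1)) := by
      have := ((summable_nat_add_iff 1).2 hsum).mul_left C
      simpa only [← hvshift] using this
    exact (summable_nat_add_iff 1).1 hshift
  have hg0 : g 0 = 0 := by simp [hg]
  have htshift : ∑' m, g (m+1) = S := by
    have h' := Summable.tsum_eq_zero_add hsum
    rw [hg0, zero_add] at h'
    rw [hSdef, h']
  have hv_sum : ∑' m, v m = v 0 + C * S := by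
    rw [Summable.tsum_eq_zero_add hsumv]
    congr 1
    calc ∑' m, v (m+1) = ∑' m, C * g (m+1) := by simp only [hvshift]
      _ = C * ∑' m, g (m+1) := tsum_mul_left
      _ = C * S := by rw [htshift]
  have hv0 : v 0 = ν * b₃ * n * (Real.sqrt 2 * Real.sqrt (1 + 2*L)) := by
    have hρ1 : ρ 1 = ν * b₃ * Real.sqrt 2 * Real.sqrt n := by
      simp only [hρdef, if_neg one_ne_zero, Nat.cast_one]
      rw [show (2:ℝ)^((1:ℝ)/2) = Real.sqrt 2 from (Real.sqrt_eq_rpow 2).symm]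
    simp only [hv, if_pos rfl, hadef, if_pos rfl, hρ0, sub_zero, hρ1]
    rw [Real.sqrt_mul (by positivity)]
    have hss : Real.sqrt n * Real.sqrt n = (n:ℝ) := Real.mul_self_sqrt (by positivity)
    linear_combination (ν * b₃ * Real.sqrt 2 * Real.sqrt (1+2*L)) * hss
  have htsum_v : ∑' m, v m ≤ b₃ * b₅ * ν * n := by
    rw [hv_sum, hv0, hC]
    have hkey2 : Real.sqrt 2 * Real.sqrt (1+2*L) + Real.sqrt (2*b₄) * S ≤ b₅ := by
      rw [hb₅def]; linarith
    calc ν * b₃ * n * (Real.sqrt 2 * Real.sqrt (1 + 2*L)) + ν * b₃ * n * Real.sqrt (2*b₄) * S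
        = ν * b₃ * n * (Real.sqrt 2 * Real.sqrt (1 + 2*L) + Real.sqrt (2*b₄) * S) := by ring
      _ ≤ ν * b₃ * n * b₅ := mul_le_mul_of_nonneg_left hkey2 (by positivity)
      _ = b₃ * b₅ * ν * n := by ring
  -- the lintegral bound
  have hlint : ∫⁻ r in Set.Ioi (0:ℝ),
      ENNReal.ofReal (Real.sqrt (Real.log (coveringNumber T r)))
      ≤ ENNReal.ofReal (b₃ * b₅ * ν * n) := by
    calc ∫⁻ r in Set.Ioi (0:ℝ), ENNReal.ofReal (Real.sqrt (Real.log (coveringNumber T r)))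
        ≤ ∫⁻ r in ⋃ m, Set.Ioc (ρ m) (ρ (m+1)),
            ENNReal.ofReal (Real.sqrt (Real.log (coveringNumber T r))) :=
          lintegral_mono_set hcover
      _ ≤ ∑' m, ∫⁻ r in Set.Ioc (ρ m) (ρ (m+1)),
            ENNReal.ofReal (Real.sqrt (Real.log (coveringNumber T r))) :=
          lintegral_iUnion_le _ _
      _ ≤ ∑' m, ENNReal.ofReal (v m) := by
          apply ENNReal.tsum_le_tsum
          intro m
          calc ∫⁻ r in Set.Ioc (ρ m) (ρ (m+1)),
                ENNReal.ofReal (Real.sqrt (Real.log (coveringNumber T r)))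
              ≤ ∫⁻ _ in Set.Ioc (ρ m) (ρ (m+1)), ENNReal.ofReal (a m) :=
                setLIntegral_mono' measurableSet_Ioc
                  (fun r hr => ENNReal.ofReal_le_ofReal (hpiece m r hr))
            _ = ENNReal.ofReal (a m) * volume (Set.Ioc (ρ m) (ρ (m+1))) :=
                setLIntegral_const _ _
            _ = ENNReal.ofReal (a m) * ENNReal.ofReal (ρ (m+1) - ρ m) := by
                rw [Real.volume_Ioc]
            _ = ENNReal.ofReal (a m * (ρ (m+1) - ρ m)) :=
                (ENNReal.ofReal_mul (ha_nonneg m)).symm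
            _ ≤ ENNReal.ofReal (v m) := ENNReal.ofReal_le_ofReal (hkey m)
      _ = ENNReal.ofReal (∑' m, v m) := (ENNReal.ofReal_tsum_of_nonneg hv_nonneg hsumv).symm
      _ ≤ ENNReal.ofReal (b₃ * b₅ * ν * n) := ENNReal.ofReal_le_ofReal htsum_v
  -- conclude
  by_cases hint : Integrable (fun r => Real.sqrt (Real.log (coveringNumber T r)))
      (volume.restrict (Set.Ioi (0:ℝ)))
  · rw [integral_eq_lintegral_of_nonneg_ae
      (Filter.Eventually.of_forall (fun r => Real.sqrt_nonneg _))
      hint.aestronglyMeasurable]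
    have hfin : ENNReal.ofReal (b₃ * b₅ * ν * n) ≠ ⊤ := ENNReal.ofReal_ne_top
    have := ENNReal.toReal_mono hfin hlint
    rwa [ENNReal.toReal_ofReal (by positivity)] at this
  · rw [integral_undef hint]
    positivity
end
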